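/- arXiv:1307.6708 — 6 statements merged into one kernel-verified Lean document; each statement's English description precedes it below -/
import Mathlib

section
/- Let G be a finite simple graph with no isolated vertices, let H be a subgraph of G with vertex set U, and let G[U] be the subgraph of G induced by U. Then P(H) is a face of the edge polytope P(G) if and only if P(H) is a face of P(G[U]). -/
open Set Filter Topology

/-!
The functional `x ↦ ∑_{i ∈ U} xᵢ` is maximized on `P(G)` exactly at `P(G[U])`, so `P(G[U])` is a
face of `P(G)`, and a face of `P(G)` lying in `P(G[U])` is a face of `P(G[U])`. Conversely, a face
of a face of a polytope is a face: if `l₁` exposes `B` in `conv S` and `l₂` exposes `C` in `B`,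
then `l₁ + ε l₂` exposes `C` for small `ε > 0`. This reduces to the finite set `S`, because the
maximizers of a functional on `conv S` form the convex hull of its maximizers on `S`.
-/

/-- The edge polytope of a subgraph `H` of a graph on the vertex set `Fin n`:
the convex hull in `ℝⁿ` of the points `e i + e j` over all edges `{i, j}` of `H`. -/
def subgraphEdgePolytope {n : ℕ} {G : SimpleGraph (Fin n)} (H : G.Subgraph) :
    Set (Fin n → ℝ) :=
  convexHull ℝ {x | ∃ i j : Fin n, H.Adj i j ∧ x = Pi.single i 1 + Pi.single j 1}

/-- The edge polytope of a graph `G` on the vertex set `Fin n`. -/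
def edgePolytope {n : ℕ} (G : SimpleGraph (Fin n)) : Set (Fin n → ℝ) :=
  convexHull ℝ {x | ∃ i j : Fin n, G.Adj i j ∧ x = Pi.single i 1 + Pi.single j 1}

/-- A face of a polytope is the intersection of the polytope with a supporting
hyperplane, together with `∅` and the polytope itself; this is captured by `IsExposed`. -/
def IsFaceOf {n : ℕ} (P F : Set (Fin n → ℝ)) : Prop :=
  IsExposed ℝ P F

section Exposed

variable {E : Type*} [AddCommGroup E] [Module ℝ E] [TopologicalSpace E]

theorem ContinuousLinearMap.toExposed_convexHull (l : StrongDual ℝ E) (S : Set E) :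
    l.toExposed (convexHull ℝ S) = convexHull ℝ (l.toExposed S) := by
  classical
  apply Subset.antisymm
  · rintro _ ⟨hx, hmax⟩
    obtain ⟨ι, t, w, z, hw₀, hw₁, hz, rfl⟩ := (convexHull_eq S).subset hx
    set x := t.centerMass w z with hx_def
    have hlx : ∑ i ∈ t, w i * (l x - l (z i)) = 0 := by
      have : l x = ∑ i ∈ t, w i * l (z i) := by
        simp [x, Finset.centerMass_eq_of_sum_1 _ _ hw₁, map_sum, smul_eq_mul]
      simp only [mul_sub, Finset.sum_sub_distrib, ← Finset.sum_mul, hw₁, one_mul, this, sub_self]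
    have hattain : ∀ i ∈ t, w i ≠ 0 → l (z i) = l x := fun i hi hwi => by
      have hterms := (Finset.sum_eq_zero_iff_of_nonneg fun j hj =>
        mul_nonneg (hw₀ j hj) (sub_nonneg.2 (hmax _ (subset_convexHull ℝ S (hz j hj))))).1 hlx
      linarith [(mul_eq_zero.1 (hterms i hi)).resolve_left hwi]
    rw [hx_def, ← Finset.centerMass_filter_ne_zero]
    refine Finset.centerMass_mem_convexHull _ (fun i hi => hw₀ i (Finset.mem_filter.1 hi).1)
      (by rw [Finset.sum_filter_ne_zero, hw₁]; exact one_pos) fun i hi => ?_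
    obtain ⟨hit, hwi⟩ := Finset.mem_filter.1 hi
    exact ⟨hz i hit, fun y hy => hattain i hit hwi ▸ hmax y (subset_convexHull ℝ S hy)⟩
  · refine convexHull_min ?_ ((ContinuousLinearMap.toExposed.isExposed).convex
      (convex_convexHull ℝ S))
    rintro s ⟨hs, hmax⟩
    exact ⟨subset_convexHull ℝ S hs, fun y hy =>
      convexHull_min hmax (convex_halfSpace_le l.toLinearMap.isLinear (l s)) hy⟩

theorem ContinuousLinearMap.exists_toExposed_add_smul_eq {S : Set E} (hS : S.Finite)
    (l₁ l₂ : StrongDual ℝ E) :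
    ∃ ε > (0 : ℝ), (l₁ + ε • l₂).toExposed S = l₂.toExposed (l₁.toExposed S) := by
  set T := l₁.toExposed S
  have hgap : ∀ p ∈ (S \ T) ×ˢ T, ∀ᶠ ε in 𝓝 (0 : ℝ),
      l₁ p.1 + ε * l₂ p.1 < l₁ p.2 + ε * l₂ p.2 := by
    rintro ⟨s, t⟩ ⟨⟨hs, hsT⟩, ht⟩
    refine ContinuousAt.eventually_lt (by fun_prop) (by fun_prop) ?_
    obtain ⟨y, hy, hsy⟩ : ∃ y ∈ S, l₁ s < l₁ y := by
      simpa [T, ContinuousLinearMap.toExposed, hs] using hsT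
    simpa using hsy.trans_le (ht.2 y hy)
  have hsmall : ∀ᶠ ε in 𝓝[>] (0 : ℝ), ∀ p ∈ (S \ T) ×ˢ T,
      l₁ p.1 + ε * l₂ p.1 < l₁ p.2 + ε * l₂ p.2 :=
    nhdsWithin_le_nhds ((hS.sdiff.prod (hS.subset (sep_subset _ _))).eventually_all.2 hgap)
  obtain ⟨ε, hε, hεpos⟩ := (hsmall.and self_mem_nhdsWithin).exists
  have happ : ∀ x, (l₁ + ε • l₂) x = l₁ x + ε * l₂ x := fun x => rfl
  refine ⟨ε, hεpos, Subset.antisymm ?_ ?_⟩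
  · rintro s ⟨hs, hmax⟩
    have hsT : s ∈ T := by
      by_contra hsT
      obtain ⟨t, ht, htmax⟩ := S.exists_max_image l₁ hS ⟨s, hs⟩
      exact (hε (s, t) ⟨⟨hs, hsT⟩, ht, htmax⟩).not_ge (by simpa only [happ] using hmax t ht)
    refine ⟨hsT, fun u hu => ?_⟩
    have := hmax u hu.1
    simp only [happ, le_antisymm (hu.2 s hs) (hsT.2 u hu.1)] at this
    exact le_of_mul_le_mul_left (by linarith) hεpos
  · rintro s ⟨hsT, hmax⟩
    refine ⟨hsT.1, fun u hu => ?_⟩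
    rw [happ, happ]
    by_cases huT : u ∈ T
    · have := mul_le_mul_of_nonneg_left (hmax u huT) hεpos.le
      linarith [le_antisymm (huT.2 s hsT.1) (hsT.2 u hu)]
    · exact (hε (u, s) ⟨⟨hu, huT⟩, hsT⟩).le

theorem IsExposed.trans_convexHull_of_finite {S B C : Set E} (hS : S.Finite)
    (hB : IsExposed ℝ (convexHull ℝ S) B) (hC : IsExposed ℝ B C) :
    IsExposed ℝ (convexHull ℝ S) C := by
  intro hCne
  obtain ⟨l₂, rfl⟩ := hC hCne
  obtain ⟨l₁, rfl⟩ := hB (hCne.mono (sep_subset _ _))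
  obtain ⟨ε, -, hε⟩ := ContinuousLinearMap.exists_toExposed_add_smul_eq hS l₁ l₂
  refine ⟨l₁ + ε • l₂, ?_⟩
  change l₂.toExposed (l₁.toExposed _) = (l₁ + ε • l₂).toExposed _
  simp only [ContinuousLinearMap.toExposed_convexHull, hε]

end Exposed

section EdgeVectors

variable {n : ℕ}

/-- `edgePolytope G` and `subgraphEdgePolytope H` are, by definition, the convex hulls of
`edgeVectors G.Adj` and `edgeVectors H.Adj`. -/
def edgeVectors (r : Fin n → Fin n → Prop) : Set (Fin n → ℝ) :=
  {x | ∃ i j : Fin n, r i j ∧ x = Pi.single i 1 + Pi.single j 1}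

theorem edgeVectors_finite (r : Fin n → Fin n → Prop) : (edgeVectors r).Finite :=
  (finite_range fun p : Fin n × Fin n => (Pi.single p.1 1 + Pi.single p.2 1 : Fin n → ℝ)).subset
    fun _ ⟨i, j, _, hx⟩ => ⟨(i, j), hx.symm⟩

theorem edgeVectors_mono {r r' : Fin n → Fin n → Prop} (h : r ≤ r') :
    edgeVectors r ⊆ edgeVectors r' :=
  fun _ ⟨i, j, hij, hx⟩ => ⟨i, j, h i j hij, hx⟩

noncomputable def coordSumOn (U : Set (Fin n)) : StrongDual ℝ (Fin n → ℝ) :=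
  ∑ i, U.indicator (1 : Fin n → ℝ) i • ContinuousLinearMap.proj i

theorem coordSumOn_single_add_single (U : Set (Fin n)) (i j : Fin n) :
    coordSumOn U (Pi.single i 1 + Pi.single j 1) = U.indicator 1 i + U.indicator 1 j := by
  simp [coordSumOn, Pi.single_apply, mul_add, Finset.sum_add_distrib]

theorem toExposed_coordSumOn_edgeVectors {U : Set (Fin n)} {r : Fin n → Fin n → Prop}
    {i₀ j₀ : Fin n} (h₀ : i₀ ∈ U ∧ j₀ ∈ U ∧ r i₀ j₀) :
    (coordSumOn U).toExposed (edgeVectors r) = edgeVectors fun i j => i ∈ U ∧ j ∈ U ∧ r i j := by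
  have hle : ∀ i j : Fin n, U.indicator 1 i + U.indicator 1 j ≤ (2 : ℝ) := fun i j => by
    by_cases hi : i ∈ U <;> by_cases hj : j ∈ U <;> norm_num [hi, hj]
  have htwo : ∀ i j : Fin n, U.indicator 1 i + U.indicator 1 j = (2 : ℝ) ↔ i ∈ U ∧ j ∈ U :=
    fun i j => by by_cases hi : i ∈ U <;> by_cases hj : j ∈ U <;> norm_num [hi, hj]
  ext x
  constructor
  · rintro ⟨⟨i, j, hij, rfl⟩, hmax⟩
    have h₂ := hmax _ ⟨i₀, j₀, h₀.2.2, rfl⟩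
    rw [coordSumOn_single_add_single, coordSumOn_single_add_single, (htwo i₀ j₀).2 ⟨h₀.1, h₀.2.1⟩]
      at h₂
    obtain ⟨hi, hj⟩ := (htwo i j).1 (le_antisymm (hle i j) h₂)
    exact ⟨i, j, ⟨hi, hj, hij⟩, rfl⟩
  · rintro ⟨i, j, ⟨hi, hj, hij⟩, rfl⟩
    refine ⟨⟨i, j, hij, rfl⟩, ?_⟩
    rintro _ ⟨k, l, -, rfl⟩
    rw [coordSumOn_single_add_single, coordSumOn_single_add_single, (htwo i j).2 ⟨hi, hj⟩]
    exact hle k l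

theorem isExposed_convexHull_edgeVectors_restrict (U : Set (Fin n)) (r : Fin n → Fin n → Prop) :
    IsExposed ℝ (convexHull ℝ (edgeVectors r))
      (convexHull ℝ (edgeVectors fun i j => i ∈ U ∧ j ∈ U ∧ r i j)) := by
  intro hne
  obtain ⟨_, i, j, hij, rfl⟩ := convexHull_nonempty_iff.1 hne
  refine ⟨coordSumOn U, ?_⟩
  rw [← ContinuousLinearMap.toExposed, ContinuousLinearMap.toExposed_convexHull,
    toExposed_coordSumOn_edgeVectors hij]

end EdgeVectors

theorem face_is_local_general {n : ℕ} (G : SimpleGraph (Fin n))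
    (H : G.Subgraph) :
    IsFaceOf (edgePolytope G) (subgraphEdgePolytope H) ↔
      IsFaceOf (subgraphEdgePolytope ((⊤ : G.Subgraph).induce H.verts))
        (subgraphEdgePolytope H) := by
  have hH : H.Adj ≤ ((⊤ : G.Subgraph).induce H.verts).Adj :=
    fun _ _ h => ⟨h.fst_mem, h.snd_mem, h.adj_sub⟩
  have hU : ((⊤ : G.Subgraph).induce H.verts).Adj ≤ G.Adj := fun _ _ h => h.2.2
  constructor
  · intro h
    exact h.mono (convexHull_mono (edgeVectors_mono hU)) (convexHull_mono (edgeVectors_mono hH))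
  · exact (isExposed_convexHull_edgeVectors_restrict H.verts G.Adj).trans_convexHull_of_finite
      (edgeVectors_finite G.Adj)

/-- Let `G` be a graph with no isolated vertices, and let `H` be a subgraph of `G` with
vertex set `U = H.verts` (no isolated vertices).  Then `P(H)` is a face of `P(G)` if
and only if `P(H)` is a face of `P(G[U])`, where `G[U]` is the subgraph of `G` induced
by `U`. -/
theorem face_is_local {n : ℕ} (G : SimpleGraph (Fin n))
    (hiso : ∀ v : Fin n, ∃ w : Fin n, G.Adj v w)
    (H : G.Subgraph) (hHiso : ∀ v ∈ H.verts, ∃ w : Fin n, H.Adj v w) :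
    IsFaceOf (edgePolytope G) (subgraphEdgePolytope H) ↔
      IsFaceOf (subgraphEdgePolytope ((⊤ : G.Subgraph).induce H.verts))
        (subgraphEdgePolytope H) :=
  face_is_local_general G H
end

section
/- Let G be a finite simple graph with no isolated vertices and let {i,j} and {k,ℓ} be two distinct edges of G. The segment joining the vertices e_i + e_j and e_k + e_ℓ of the edge polytope P(G) is an edge (1-dimensional face) of P(G) if and only if either (i) the edges {i,j} and {k,ℓ} share a common vertex, or (ii) {i,j} ∩ {k,ℓ} = ∅ and there is no 4-cycle of G containing both edges {i,j} and {k,ℓ}. -/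
open Set

/-- The dimension of a polytope: the dimension of its affine hull. -/
noncomputable def polyDim {n : ℕ} (P : Set (Fin n → ℝ)) : ℕ :=
  Module.finrank ℝ (vectorSpan ℝ P)

section Aux

variable {n : ℕ}

/-- The vertex of the edge polytope associated to the pair `(a, b)`. -/
noncomputable def epv (a b : Fin n) : Fin n → ℝ := Pi.single a 1 + Pi.single b 1

lemma epv_apply (a b v : Fin n) :
    epv a b v = (if v = a then (1:ℝ) else 0) + (if v = b then 1 else 0) := by
  simp [epv, Pi.single_apply]

lemma epv_comm (a b : Fin n) : epv a b = epv b a := add_comm _ _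

/-- The linear functional with coefficients `c`. -/
noncomputable def lfun (c : Fin n → ℝ) : (Fin n → ℝ) →L[ℝ] ℝ :=
  ∑ v, c v • ContinuousLinearMap.proj v

lemma lfun_apply (c : Fin n → ℝ) (x : Fin n → ℝ) : lfun c x = ∑ v, c v * x v := by
  simp [lfun]

lemma lfun_epv (c : Fin n → ℝ) (a b : Fin n) : lfun c (epv a b) = c a + c b := by
  simp only [lfun_apply, epv_apply, mul_add, Finset.sum_add_distrib, mul_ite, mul_one, mul_zero]
  rw [Finset.sum_ite_eq' Finset.univ a c, Finset.sum_ite_eq' Finset.univ b c]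
  simp

lemma epv_mem (G : SimpleGraph (Fin n)) {a b : Fin n} (h : G.Adj a b) :
    epv a b ∈ edgePolytope G :=
  subset_convexHull ℝ _ ⟨a, b, h, rfl⟩

/-- The core exposedness criterion: if a linear functional is maximized on the vertex
set of the edge polytope exactly at `epv i j` and `epv k l`, then the corresponding
segment is an exposed face. -/
lemma exposed_core (G : SimpleGraph (Fin n)) (i j k l : Fin n)
    (hij : G.Adj i j) (hkl : G.Adj k l) (c : Fin n → ℝ)
    (hmax : ∀ a b, G.Adj a b → c a + c b ≤ c i + c j)
    (heq : c k + c l = c i + c j)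
    (hstrict : ∀ a b, G.Adj a b → c a + c b = c i + c j →
      epv a b = epv i j ∨ epv a b = epv k l) :
    IsExposed ℝ (edgePolytope G) (segment ℝ (epv i j) (epv k l)) := by
  intro _
  refine ⟨lfun c, ?_⟩
  set M : ℝ := c i + c j with hM
  have hPle : ∀ y ∈ edgePolytope G, lfun c y ≤ M := by
    intro y hy
    have hsub : edgePolytope G ⊆ {y | lfun c y ≤ M} := by
      apply convexHull_min ?_ (convex_halfSpace_le
        ⟨fun a b => (lfun c).map_add a b, fun r x => (lfun c).map_smul r x⟩ M)
      rintro _ ⟨a, b, hab, rfl⟩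
      have : lfun c (epv a b) ≤ M := by rw [lfun_epv]; exact hmax a b hab
      exact this
    exact hsub hy
  ext x
  constructor
  · intro hx
    have hxP : x ∈ edgePolytope G :=
      (convex_convexHull ℝ _).segment_subset (epv_mem G hij) (epv_mem G hkl) hx
    refine ⟨hxP, fun y hy => ?_⟩
    obtain ⟨a, b, ha, hb, hab, rfl⟩ := hx
    have hx2 : lfun c (a • epv i j + b • epv k l) = M := by
      rw [map_add, map_smul, map_smul, lfun_epv, lfun_epv, smul_eq_mul, smul_eq_mul, heq, ← hM,
        ← add_mul, hab, one_mul]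
    rw [hx2]; exact hPle y hy
  · rintro ⟨hxP, hmaxx⟩
    have hxM : lfun c x = M := by
      refine le_antisymm (hPle x hxP) ?_
      have := hmaxx _ (epv_mem G hij)
      rwa [lfun_epv] at this
    have hxP' := hxP
    rw [edgePolytope, convexHull_eq] at hxP'
    obtain ⟨ι, t, w, z, hw0, hw1, hzS, hx⟩ := hxP'
    have hzle : ∀ p ∈ t, lfun c (z p) ≤ M := by
      intro p hp
      obtain ⟨a, b, hab, hz⟩ := hzS p hp
      rw [hz]
      have : lfun c (epv a b) ≤ M := by rw [lfun_epv]; exact hmax a b hab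
      exact this
    have hxsum : x = ∑ p ∈ t, w p • z p := by
      rw [← hx, Finset.centerMass_eq_of_sum_1 _ _ hw1]
    have hlsum : lfun c x = ∑ p ∈ t, w p * lfun c (z p) := by
      rw [hxsum, map_sum]
      simp [smul_eq_mul]
    have hsum0 : ∑ p ∈ t, w p * (M - lfun c (z p)) = 0 := by
      have : ∑ p ∈ t, w p * (M - lfun c (z p))
          = (∑ p ∈ t, w p) * M - ∑ p ∈ t, w p * lfun c (z p) := by
        rw [Finset.sum_mul, ← Finset.sum_sub_distrib]
        congr 1; ext p; ring
      rw [this, hw1, ← hlsum, hxM]; ring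
    have hzero : ∀ p ∈ t, w p * (M - lfun c (z p)) = 0 :=
      (Finset.sum_eq_zero_iff_of_nonneg (fun p hp =>
        mul_nonneg (hw0 p hp) (by linarith [hzle p hp]))).mp hsum0
    have hsubpair : ∀ p ∈ t.filter (fun p => w p ≠ 0),
        z p ∈ ({epv i j, epv k l} : Set (Fin n → ℝ)) := by
      intro p hp
      obtain ⟨hpt, hwp⟩ := Finset.mem_filter.mp hp
      have h0 := hzero p hpt
      have hzM : lfun c (z p) = M := by
        rcases mul_eq_zero.mp h0 with h | h
        · exact absurd h hwp
        · linarith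
      obtain ⟨a, b, hab, hz⟩ := hzS p hpt
      have hz' : z p = epv a b := hz
      have : c a + c b = M := by rw [← lfun_epv c a b, ← hz', hzM]
      rcases hstrict a b hab this with h | h
      · left; rw [hz']; exact h
      · right; rw [hz']; exact h
    have hmem : x ∈ convexHull ℝ ({epv i j, epv k l} : Set (Fin n → ℝ)) := by
      rw [← hx, ← Finset.centerMass_filter_ne_zero z]
      refine Finset.centerMass_mem_convexHull _ (fun p hp => hw0 p (Finset.mem_filter.mp hp).1)
        ?_ hsubpair
      rw [Finset.sum_filter_ne_zero]
      · rw [hw1]; norm_num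
    rwa [convexHull_pair] at hmem

lemma polyDim_segment {x y : Fin n → ℝ} (h : x ≠ y) : polyDim (segment ℝ x y) = 1 := by
  rw [polyDim, ← direction_affineSpan, ← convexHull_pair, affineSpan_convexHull,
    direction_affineSpan, vectorSpan_pair]
  exact finrank_span_singleton (vsub_ne_zero.mpr h)

lemma epv_inj {i j k l : Fin n} (hij : i ≠ j) (hkl : k ≠ l) (h : epv i j = epv k l) :
    s(i, j) = s(k, l) := by
  have key : ∀ a b u v : Fin n, a ≠ b → epv a b = epv u v → a = u ∨ a = v := by
    intro a b u v hab he
    by_contra h'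
    push_neg at h'
    have := congrFun he a
    rw [epv_apply, epv_apply] at this
    simp [hab, h'.1, h'.2] at this
  have hi := key i j k l hij h
  have hj := key j i k l (Ne.symm hij) (by rw [← h]; exact add_comm _ _)
  rw [Sym2.eq_iff]
  rcases hi with rfl | rfl <;> rcases hj with rfl | rfl <;> tauto

lemma epv_not_mem_segment {i j k l : Fin n} (hij : i ≠ j) (hik : i ≠ k) (hil : i ≠ l)
    (hki : k ≠ i) (hkj : k ≠ j) (hkl : k ≠ l) :
    epv i k ∉ segment ℝ (epv i j) (epv k l) := by
  rintro ⟨a, b, ha, hb, hab, heq⟩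
  have h1 := congrFun heq i
  have h2 := congrFun heq k
  simp only [Pi.add_apply, Pi.smul_apply, smul_eq_mul, epv_apply] at h1 h2
  simp [hij, hik, hil, hki, hkj, hkl, hik.symm] at h1 h2
  linarith

lemma cycle4 (G : SimpleGraph (Fin n)) {i j k l a : Fin n} (c : G.Walk a a)
    (hlen : c.length = 4) (h1 : s(i, j) ∈ c.edges) (h2 : s(k, l) ∈ c.edges)
    (hik : i ≠ k) (hil : i ≠ l) (hjk : j ≠ k) (hjl : j ≠ l) :
    (G.Adj i k ∧ G.Adj j l) ∨ (G.Adj i l ∧ G.Adj j k) := by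
  cases c with
  | nil => simp at hlen
  | cons ha1 p =>
  cases p with
  | nil => simp at hlen
  | cons ha2 p =>
  cases p with
  | nil => simp at hlen
  | cons ha3 p =>
  cases p with
  | nil => simp at hlen
  | cons ha4 p =>
  cases p with
  | cons ha5 p => simp [SimpleGraph.Walk.length_cons] at hlen
  | nil =>
  have s1 := ha1.symm
  have s2 := ha2.symm
  have s3 := ha3.symm
  have s4 := ha4.symm
  simp only [SimpleGraph.Walk.edges_cons, SimpleGraph.Walk.edges_nil, List.mem_cons,
    List.not_mem_nil, or_false, Sym2.eq_iff] at h1 h2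
  rcases h1 with (⟨rfl, rfl⟩ | ⟨rfl, rfl⟩) | (⟨rfl, rfl⟩ | ⟨rfl, rfl⟩) |
    (⟨rfl, rfl⟩ | ⟨rfl, rfl⟩) | (⟨rfl, rfl⟩ | ⟨rfl, rfl⟩) <;>
  rcases h2 with (⟨rfl, rfl⟩ | ⟨rfl, rfl⟩) | (⟨rfl, rfl⟩ | ⟨rfl, rfl⟩) |
    (⟨rfl, rfl⟩ | ⟨rfl, rfl⟩) | (⟨rfl, rfl⟩ | ⟨rfl, rfl⟩) <;>
  tauto

lemma no_mid (G : SimpleGraph (Fin n)) (i j k l : Fin n)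
    (hij : i ≠ j) (hkl : k ≠ l) (hik : i ≠ k) (hil : i ≠ l) (hjk : j ≠ k) (hjl : j ≠ l)
    (hik' : G.Adj i k) (hjl' : G.Adj j l)
    (hface : IsExposed ℝ (edgePolytope G) (segment ℝ (epv i j) (epv k l))) : False := by
  obtain ⟨f, hf⟩ := hface ⟨_, left_mem_segment ℝ _ _⟩
  set m : Fin n → ℝ := (1/2 : ℝ) • epv i j + (1/2 : ℝ) • epv k l with hm
  have hmseg : m ∈ segment ℝ (epv i j) (epv k l) :=
    ⟨1/2, 1/2, by norm_num, by norm_num, by norm_num, rfl⟩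
  have hmmem : m ∈ {x ∈ edgePolytope G | ∀ y ∈ edgePolytope G, f y ≤ f x} := by
    rw [← hf]; exact hmseg
  obtain ⟨hmP, hmmax⟩ := hmmem
  have hsum : epv i j + epv k l = epv i k + epv j l := by
    simp only [epv]; abel
  have hmid2 : m = (1/2 : ℝ) • epv i k + (1/2 : ℝ) • epv j l := by
    rw [hm, ← smul_add, ← smul_add, hsum]
  have h1 := hmmax _ (epv_mem G hik')
  have h2 := hmmax _ (epv_mem G hjl')
  have hfm : f m = (f (epv i k) + f (epv j l)) / 2 := by
    rw [hmid2, map_add, map_smul, map_smul]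
    simp [smul_eq_mul]
    ring
  have hfeq : f (epv i k) = f m := by linarith
  have hmem : epv i k ∈ segment ℝ (epv i j) (epv k l) := by
    rw [hf]
    exact ⟨epv_mem G hik', fun y hy => by rw [hfeq]; exact hmmax y hy⟩
  exact epv_not_mem_segment hij hik hil hik.symm hjk.symm hkl hmem

lemma mk_cycle4 (G : SimpleGraph (Fin n)) {a b c d : Fin n}
    (h1 : G.Adj a b) (h2 : G.Adj b c) (h3 : G.Adj c d) (h4 : G.Adj d a)
    (hac : a ≠ c) (hbd : b ≠ d) :
    ∃ (x : Fin n) (w : G.Walk x x), w.IsCycle ∧ w.length = 4 ∧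
      s(a, b) ∈ w.edges ∧ s(c, d) ∈ w.edges := by
  refine ⟨a, .cons h1 (.cons h2 (.cons h3 (.cons h4 .nil))), ?_, by simp, by simp, by simp⟩
  rw [SimpleGraph.Walk.isCycle_def, SimpleGraph.Walk.isTrail_def]
  refine ⟨?_, by simp, ?_⟩
  · simp only [SimpleGraph.Walk.edges_cons, SimpleGraph.Walk.edges_nil, List.nodup_cons,
      List.mem_cons, List.not_mem_nil, or_false, List.nodup_nil, and_true, Sym2.eq_iff]
    push_neg
    have n1 := h1.ne; have n1' := h1.ne'; have n2 := h2.ne; have n2' := h2.ne'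
    have n3 := h3.ne; have n3' := h3.ne'; have n4 := h4.ne; have n4' := h4.ne'
    have n5 := hac.symm; have n6 := hbd.symm
    tauto
  · simp only [SimpleGraph.Walk.support_cons, SimpleGraph.Walk.support_nil, List.tail_cons,
      List.nodup_cons, List.mem_cons, List.not_mem_nil, or_false, List.nodup_nil, and_true]
    have n1 := h1.ne; have n1' := h1.ne'; have n2 := h2.ne; have n2' := h2.ne'
    have n3 := h3.ne; have n3' := h3.ne'; have n4 := h4.ne; have n4' := h4.ne'
    have n5 := hac.symm; have n6 := hbd.symm
    tauto

/-- Case of two edges sharing the common vertex `j`. -/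
lemma shared_case (G : SimpleGraph (Fin n)) (i j l : Fin n)
    (hij : G.Adj i j) (hjl : G.Adj j l) (hil : i ≠ l) :
    IsExposed ℝ (edgePolytope G) (segment ℝ (epv i j) (epv j l)) := by
  classical
  have hij' : i ≠ j := hij.ne
  have hjl' : j ≠ l := hjl.ne
  set c : Fin n → ℝ := fun v => if v = j then 2 else if v = i then 1 else if v = l then 1 else 0
    with hc
  have hci : c i = 1 := by simp [hc, hij']
  have hcj : c j = 2 := by simp [hc]
  have hcl : c l = 1 := by simp [hc, hjl'.symm, hil.symm]
  have hcle : ∀ v, c v ≤ 2 := by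
    intro v; simp only [hc]; split_ifs <;> norm_num
  have hcle1 : ∀ v, v ≠ j → c v ≤ 1 := by
    intro v hv; simp only [hc]; rw [if_neg hv]; split_ifs <;> norm_num
  have hc0 : ∀ v, 0 ≤ c v := by
    intro v; simp only [hc]; split_ifs <;> norm_num
  have hM : c i + c j = 3 := by rw [hci, hcj]; norm_num
  refine exposed_core G i j j l hij hjl c ?_ (by rw [hcj, hcl, hci]; norm_num) ?_
  · intro a b hab
    rw [hM]
    by_cases haj : a = j
    · linarith [hcle1 b (fun h => hab.ne (haj.trans h.symm)), hcle a]
    · linarith [hcle1 a haj, hcle b]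
  · intro a b hab hsum
    rw [hM] at hsum
    have hone : ∀ v, v ≠ j → c v = 1 → v = i ∨ v = l := by
      intro v hv h1
      by_contra h'
      push_neg at h'
      simp [hc, hv, h'.1, h'.2] at h1
    by_cases haj : a = j
    · have hbj : b ≠ j := fun h => hab.ne (haj.trans h.symm)
      have hca : c a = 2 := by rw [haj, hcj]
      have hb1 : c b = 1 := by have := hcle1 b hbj; linarith
      rcases hone b hbj hb1 with rfl | rfl
      · left; rw [haj]; exact epv_comm _ _
      · right; rw [haj]
    · have ha1 : c a ≤ 1 := hcle1 a haj
      have hbj : b = j := by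
        by_contra hbj
        have := hcle1 b hbj
        linarith
      have hcb : c b = 2 := by rw [hbj, hcj]
      have ha1' : c a = 1 := by linarith
      rcases hone a haj ha1' with rfl | rfl
      · left; rw [hbj]
      · right; rw [hbj]; exact epv_comm _ _

/-- Case of two disjoint edges not contained in a common `4`-cycle. -/
lemma disjoint_case (G : SimpleGraph (Fin n)) (i j k l : Fin n)
    (hij : G.Adj i j) (hkl : G.Adj k l)
    (hik : i ≠ k) (hil : i ≠ l) (hjk : j ≠ k) (hjl : j ≠ l)
    (h4 : ¬(G.Adj i k ∧ G.Adj j l)) (h4' : ¬(G.Adj i l ∧ G.Adj j k)) :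
    IsExposed ℝ (edgePolytope G) (segment ℝ (epv i j) (epv k l)) := by
  classical
  have hij' : i ≠ j := hij.ne
  have hkl' : k ≠ l := hkl.ne
  set s : ℝ := if G.Adj i k then -1 else if G.Adj j l then 1 else 0 with hs
  set t : ℝ := if G.Adj i l then -1 else if G.Adj j k then 1 else 0 with ht
  have hs_ik : G.Adj i k → s = -1 := fun h => by simp [hs, h]
  have hs_jl : G.Adj j l → s = 1 := fun h => by
    have : ¬ G.Adj i k := fun h' => h4 ⟨h', h⟩
    simp [hs, this, h]
  have ht_il : G.Adj i l → t = -1 := fun h => by simp [ht, h]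
  have ht_jk : G.Adj j k → t = 1 := fun h => by
    have : ¬ G.Adj i l := fun h' => h4' ⟨h', h⟩
    simp [ht, this, h]
  have hsb : -1 ≤ s ∧ s ≤ 1 := by rw [hs]; split_ifs <;> norm_num
  have htb : -1 ≤ t ∧ t ≤ 1 := by rw [ht]; split_ifs <;> norm_num
  set a : ℝ := (s + t) / 4 with ha
  set b : ℝ := (s - t) / 4 with hb
  have hab1 : a + b = s / 2 := by rw [ha, hb]; ring
  have hab2 : a - b = t / 2 := by rw [ha, hb]; ring
  have haB : -(1/2) ≤ a ∧ a ≤ 1/2 := by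
    constructor <;> [rw [ha]; rw [ha]] <;>
      · obtain ⟨h1, h2⟩ := hsb; obtain ⟨h3, h4⟩ := htb; linarith
  have hbB : -(1/2) ≤ b ∧ b ≤ 1/2 := by
    constructor <;> [rw [hb]; rw [hb]] <;>
      · obtain ⟨h1, h2⟩ := hsb; obtain ⟨h3, h4⟩ := htb; linarith
  set c : Fin n → ℝ := fun v =>
    if v = i then 1 + a else if v = j then 1 - a else
    if v = k then 1 + b else if v = l then 1 - b else 0 with hc
  have hci : c i = 1 + a := by simp [hc]
  have hcj : c j = 1 - a := by simp [hc, hij'.symm]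
  have hck : c k = 1 + b := by simp [hc, hik.symm, hjk.symm]
  have hcl : c l = 1 - b := by simp [hc, hil.symm, hjl.symm, hkl'.symm]
  have hM : c i + c j = 2 := by rw [hci, hcj]; ring
  have hout : ∀ v, v ≠ i → v ≠ j → v ≠ k → v ≠ l → c v = 0 := by
    intro v h1 h2 h3 h4; simp [hc, h1, h2, h3, h4]
  have hcbound : ∀ v, c v ≤ 3/2 := by
    intro v
    rcases eq_or_ne v i with rfl | h1
    · rw [hci]; linarith [haB.2]
    rcases eq_or_ne v j with rfl | h2
    · rw [hcj]; linarith [haB.1]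
    rcases eq_or_ne v k with rfl | h3
    · rw [hck]; linarith [hbB.2]
    rcases eq_or_ne v l with rfl | h4
    · rw [hcl]; linarith [hbB.1]
    · rw [hout v h1 h2 h3 h4]; norm_num
  have key : ∀ u w, G.Adj u w → c u + c w ≤ 2 ∧
      (c u + c w = 2 → epv u w = epv i j ∨ epv u w = epv k l) := by
    intro u w hadj
    have huw : u ≠ w := hadj.ne
    rcases eq_or_ne u i with rfl | hui
    · rcases eq_or_ne w j with rfl | hwj
      · exact ⟨le_of_eq hM, fun _ => Or.inl rfl⟩
      rcases eq_or_ne w k with rfl | hwk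
      · have hs1 := hs_ik hadj
        rw [hci, hck]
        constructor
        · linarith [hab1, hs1]
        · intro h; exfalso; rw [hs1] at hab1; linarith
      rcases eq_or_ne w l with rfl | hwl
      · have ht1 := ht_il hadj
        rw [hci, hcl]
        constructor
        · linarith [hab2, ht1]
        · intro h; exfalso; rw [ht1] at hab2; linarith
      · rw [hci, hout w (huw.symm) hwj hwk hwl]
        constructor
        · linarith [haB.2]
        · intro h; exfalso; linarith [haB.2]
    rcases eq_or_ne u j with rfl | huj
    · rcases eq_or_ne w i with rfl | hwi
      · exact ⟨le_of_eq (by rw [← hM]; ring), fun _ => Or.inl (epv_comm _ _)⟩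
      rcases eq_or_ne w k with rfl | hwk
      · have ht1 := ht_jk hadj
        rw [hcj, hck]
        constructor
        · linarith [hab2, ht1]
        · intro h; exfalso; rw [ht1] at hab2; linarith
      rcases eq_or_ne w l with rfl | hwl
      · have hs1 := hs_jl hadj
        rw [hcj, hcl]
        constructor
        · linarith [hab1, hs1]
        · intro h; exfalso; rw [hs1] at hab1; linarith
      · rw [hcj, hout w hwi (huw.symm) hwk hwl]
        constructor
        · linarith [haB.1]
        · intro h; exfalso; linarith [haB.1]
    rcases eq_or_ne u k with rfl | huk
    · rcases eq_or_ne w l with rfl | hwl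
      · refine ⟨le_of_eq (by rw [hck, hcl, ← hM, hci, hcj]; ring), fun _ => Or.inr rfl⟩
      rcases eq_or_ne w i with rfl | hwi
      · have hs1 := hs_ik hadj.symm
        rw [hck, hci]
        constructor
        · linarith [hab1, hs1]
        · intro h; exfalso; rw [hs1] at hab1; linarith
      rcases eq_or_ne w j with rfl | hwj
      · have ht1 := ht_jk hadj.symm
        rw [hck, hcj]
        constructor
        · linarith [hab2, ht1]
        · intro h; exfalso; rw [ht1] at hab2; linarith
      · rw [hck, hout w hwi hwj (huw.symm) hwl]
        constructor
        · linarith [hbB.2]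
        · intro h; exfalso; linarith [hbB.2]
    rcases eq_or_ne u l with rfl | hul
    · rcases eq_or_ne w k with rfl | hwk
      · refine ⟨le_of_eq (by rw [hck, hcl, ← hM, hci, hcj]; ring),
          fun _ => Or.inr (epv_comm _ _)⟩
      rcases eq_or_ne w i with rfl | hwi
      · have ht1 := ht_il hadj.symm
        rw [hcl, hci]
        constructor
        · linarith [hab2, ht1]
        · intro h; exfalso; rw [ht1] at hab2; linarith
      rcases eq_or_ne w j with rfl | hwj
      · have hs1 := hs_jl hadj.symm
        rw [hcl, hcj]
        constructor
        · linarith [hab1, hs1]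
        · intro h; exfalso; rw [hs1] at hab1; linarith
      · rw [hcl, hout w hwi hwj hwk (huw.symm)]
        constructor
        · linarith [hbB.1]
        · intro h; exfalso; linarith [hbB.1]
    · rw [hout u hui huj huk hul]
      constructor
      · linarith [hcbound w]
      · intro h; exfalso; linarith [hcbound w]
  exact exposed_core G i j k l hij hkl c
    (fun u w h => by rw [hM]; exact (key u w h).1)
    (by rw [hck, hcl, hM]; ring)
    (fun u w h he => (key u w h).2 (by rw [← hM]; exact he))

end Aux

/-- Let `{i, j}` and `{k, l}` be two distinct edges of a graph `G` with no isolated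
vertices.  The segment joining `e i + e j` and `e k + e l` is an edge (`1`-dimensional
face) of the edge polytope `P(G)` if and only if either the two graph edges share a
common vertex, or they are disjoint and no `4`-cycle of `G` contains both of them. -/
theorem edge_of_edgePolytope {n : ℕ} (G : SimpleGraph (Fin n))
    (hiso : ∀ v : Fin n, ∃ w : Fin n, G.Adj v w)
    (i j k l : Fin n) (hij : G.Adj i j) (hkl : G.Adj k l)
    (hne : s(i, j) ≠ s(k, l)) :
    (IsFaceOf (edgePolytope G)
        (segment ℝ (Pi.single i 1 + Pi.single j 1) (Pi.single k 1 + Pi.single l 1)) ∧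
      polyDim (segment ℝ (Pi.single i 1 + Pi.single j 1)
        (Pi.single k 1 + Pi.single l 1)) = 1) ↔
      (({i, j} ∩ {k, l} : Set (Fin n)).Nonempty ∨
        (({i, j} ∩ {k, l} : Set (Fin n)) = ∅ ∧
          ¬ ∃ (a : Fin n) (c : G.Walk a a), c.IsCycle ∧ c.length = 4 ∧
            s(i, j) ∈ c.edges ∧ s(k, l) ∈ c.edges)) := by
  classical
  have hij' : i ≠ j := hij.ne
  have hkl' : k ≠ l := hkl.ne
  have e1 : (Pi.single i (1:ℝ) + Pi.single j 1) = epv i j := rfl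
  have e2 : (Pi.single k (1:ℝ) + Pi.single l 1) = epv k l := rfl
  rw [e1, e2]
  have hvne : epv i j ≠ epv k l := fun h => hne (epv_inj hij' hkl' h)
  constructor
  · rintro ⟨hface, -⟩
    rcases Set.eq_empty_or_nonempty ({i, j} ∩ {k, l} : Set (Fin n)) with hempty | hne2
    · refine Or.inr ⟨hempty, ?_⟩
      rintro ⟨a, cw, hcyc, hlen, he1, he2⟩
      have hnm : ∀ v, v ∉ ({i, j} ∩ {k, l} : Set (Fin n)) := by rw [hempty]; simp
      have hik : i ≠ k := fun h => hnm i ⟨by simp, by simp [h]⟩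
      have hil : i ≠ l := fun h => hnm i ⟨by simp, by simp [h]⟩
      have hjk : j ≠ k := fun h => hnm j ⟨by simp, by simp [h]⟩
      have hjl : j ≠ l := fun h => hnm j ⟨by simp, by simp [h]⟩
      rcases cycle4 G cw hlen he1 he2 hik hil hjk hjl with ⟨hA, hB⟩ | ⟨hA, hB⟩
      · exact no_mid G i j k l hij' hkl' hik hil hjk hjl hA hB hface
      · have hface' : IsExposed ℝ (edgePolytope G) (segment ℝ (epv i j) (epv l k)) := by
          rw [epv_comm l k]; exact hface
        exact no_mid G i j l k hij' hkl'.symm hil hik hjl hjk hA hB hface'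
    · exact Or.inl hne2
  · intro h
    refine ⟨?_, polyDim_segment hvne⟩
    rcases h with ⟨v, hv1, hv2⟩ | ⟨hempty, hnocyc⟩
    · simp only [Set.mem_insert_iff, Set.mem_singleton_iff] at hv1 hv2
      rcases hv1 with h1 | h1
      · rcases hv2 with h2 | h2
        · -- i = k
          have hKI : i = k := h1.symm.trans h2
          have hjl2 : j ≠ l := fun h => hne (by rw [hKI, h])
          have hface := shared_case G j i l hij.symm (by rw [hKI]; exact hkl) hjl2
          rw [epv_comm i j, show epv k l = epv i l from by rw [← hKI]]
          exact hface
        · -- i = l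
          have hLI : i = l := h1.symm.trans h2
          have hjk2 : j ≠ k := fun h => hne (by rw [hLI, h, Sym2.eq_swap])
          have hface := shared_case G j i k hij.symm (by rw [hLI]; exact hkl.symm) hjk2
          rw [epv_comm i j, show epv k l = epv i k from by rw [← hLI, epv_comm]]
          exact hface
      · rcases hv2 with h2 | h2
        · -- j = k
          have hJK : j = k := h1.symm.trans h2
          have hil2 : i ≠ l := fun h => hne (by rw [hJK, h, Sym2.eq_swap])
          have hface := shared_case G i j l hij (by rw [hJK]; exact hkl) hil2
          rw [show epv k l = epv j l from by rw [← hJK]]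
          exact hface
        · -- j = l
          have hJL : j = l := h1.symm.trans h2
          have hik2 : i ≠ k := fun h => hne (by rw [hJL, h])
          have hface := shared_case G i j k hij (by rw [hJL]; exact hkl.symm) hik2
          rw [show epv k l = epv j k from by rw [← hJL, epv_comm]]
          exact hface
    · have hnm : ∀ v, v ∉ ({i, j} ∩ {k, l} : Set (Fin n)) := by rw [hempty]; simp
      have hik : i ≠ k := fun h => hnm i ⟨by simp, by simp [h]⟩
      have hil : i ≠ l := fun h => hnm i ⟨by simp, by simp [h]⟩
      have hjk : j ≠ k := fun h => hnm j ⟨by simp, by simp [h]⟩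
      have hjl : j ≠ l := fun h => hnm j ⟨by simp, by simp [h]⟩
      have h4 : ¬(G.Adj i k ∧ G.Adj j l) := by
        rintro ⟨hA, hB⟩
        apply hnocyc
        obtain ⟨x, w, hw⟩ := mk_cycle4 G hij hB hkl.symm hA.symm hil hjk
        exact ⟨x, w, hw.1, hw.2.1, hw.2.2.1, by rw [Sym2.eq_swap]; exact hw.2.2.2⟩
      have h4' : ¬(G.Adj i l ∧ G.Adj j k) := by
        rintro ⟨hA, hB⟩
        apply hnocyc
        obtain ⟨x, w, hw⟩ := mk_cycle4 G hij hB hkl hA.symm hik hjl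
        exact ⟨x, w, hw.1, hw.2.1, hw.2.2.1, hw.2.2.2⟩
      exact disjoint_case G i j k l hij hkl hik hil hjk hjl h4 h4'
end

section
/- For every integer n ≥ 6 there exists a finite simple graph G on n vertices with no isolated vertices such that the edge polytope P(G) has at least n⁴/54 edges (1-dimensional faces). -/
open Set

/-- `faceCount P k` is the number of (nonempty) `k`-dimensional faces of `P`,
a face being the intersection of `P` with a supporting hyperplane (`IsExposed`). -/
noncomputable def faceCount {n : ℕ} (P : Set (Fin n → ℝ)) (k : ℕ) : ℕ :=
  {F : Set (Fin n → ℝ) | IsExposed ℝ P F ∧ F.Nonempty ∧ polyDim F = k}.ncard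

/-! Split the vertices into blocks `A`, `B`, `C` with `|A| = |B| = a = ⌊3n/7⌋`, make `A` and `B`
cliques and `C` an independent set joined completely to `A ∪ B`. The segment between the vertices
`e_i + e_j` and `e_k + e_l` of `P(G)` is an edge of `P(G)` as soon as some linear functional is
maximised over the vertices exactly at these two points. Such a functional exists when the graph
edges `ij` and `kl` share a vertex, and when they are disjoint and `i` is adjacent to neither `k`
nor `l`. Pairs of the first kind number `∑ᵥ C(deg v, 2)`; pairs of the second kind include an
edge inside `A` with an edge meeting `B`, or an edge inside `B` with an edge from `A` to `C`,
giving `C(a,2)² + 2ac·C(a,2)`. For `c = n - 2a` the total exceeds `n⁴/54`. -/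

section Convex

variable {E : Type*} [AddCommGroup E] [Module ℝ E]

theorem mem_convexHull_setOf_eq_of_forall_le {V : Set E} {l : E →ₗ[ℝ] ℝ} {M : ℝ} {x : E}
    (hV : ∀ v ∈ V, l v ≤ M) (hx : x ∈ convexHull ℝ V) (hxM : l x = M) :
    x ∈ convexHull ℝ {v ∈ V | l v = M} := by
  have hlt : convexHull ℝ {v ∈ V | l v < M} ⊆ {y | l y < M} :=
    convexHull_min (fun v hv => hv.2) (convex_halfSpace_lt l.isLinear M)
  have hsplit : V = {v ∈ V | l v = M} ∪ {v ∈ V | l v < M} := by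
    ext v
    refine ⟨fun hv => (hV v hv).eq_or_lt.imp (⟨hv, ·⟩) (⟨hv, ·⟩), ?_⟩
    rintro (hv | hv) <;> exact hv.1
  rcases eq_empty_or_nonempty {v ∈ V | l v < M} with hU | hU
  · rwa [hsplit, hU, union_empty] at hx
  rcases eq_empty_or_nonempty {v ∈ V | l v = M} with hW | hW
  · rw [hsplit, hW, empty_union] at hx
    exact absurd hxM (hlt hx).ne
  -- `x` lies on a segment from a maximiser `w` to a point `u` with `l u < M`, so `x = w`
  rw [hsplit, convexHull_union hW hU] at hx
  obtain ⟨w, hw, u, hu, a, b, -, -, hab, rfl⟩ := mem_convexJoin.1 hx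
  have hlw : l w = M := convexHull_min (fun v hv => hv.2) (convex_hyperplane l.isLinear M) hw
  have hb0 : b = 0 := by
    simp only [map_add, map_smul, smul_eq_mul, hlw] at hxM
    have h : b * (M - l u) = 0 := by linear_combination M * hab - hxM
    exact (mul_eq_zero.1 h).resolve_right (sub_pos.2 (hlt hu)).ne'
  simpa [hb0, show a = 1 by linarith] using hw

theorem left_mem_extremePoints_segment (x y : E) :
    x ∈ (segment ℝ x y).extremePoints ℝ := by
  refine mem_extremePoints_iff_left.2 ⟨left_mem_segment ℝ x y, ?_⟩
  rw [segment_eq_image']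
  rintro _ ⟨s, hs, rfl⟩ _ ⟨t, ht, rfl⟩ ⟨a, b, ha, hb, hab, h⟩
  have h' : (a * s + b * t) • (y - x) = 0 := by
    rw [← sub_eq_zero.2 h]
    linear_combination (norm := module) -(hab • x)
  rcases smul_eq_zero.1 h' with h' | h'
  · have hs0 : s = 0 := by nlinarith [hs.1, ht.1]
    simp [hs0]
  · simp [h']

theorem eq_or_eq_of_segment_eq {x y x' y' : E} (h : segment ℝ x y = segment ℝ x' y') :
    x = x' ∧ y = y' ∨ x = y' ∧ y = x' := by
  have hext : ∀ {u v w : E}, u ∈ (segment ℝ v w).extremePoints ℝ → u = v ∨ u = w := by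
    intro u v w hu
    rw [← convexHull_pair] at hu
    simpa using extremePoints_convexHull_subset hu
  have hx := hext (h ▸ left_mem_extremePoints_segment x y)
  have hy := hext (h ▸ segment_symm ℝ x y ▸ left_mem_extremePoints_segment y x)
  have hx' := hext (h.symm ▸ left_mem_extremePoints_segment x' y')
  have hy' := hext (h.symm ▸ segment_symm ℝ x' y' ▸ left_mem_extremePoints_segment y' x')
  grind

theorem finrank_vectorSpan_segment {x y : E} (hxy : x ≠ y) :
    Module.finrank ℝ (vectorSpan ℝ (segment ℝ x y)) = 1 := by
  rw [← convexHull_pair, ← direction_affineSpan, affineSpan_convexHull, direction_affineSpan,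
    vectorSpan_pair]
  exact finrank_span_singleton (vsub_ne_zero.2 hxy)

variable [TopologicalSpace E]

theorem IsExposed.eq_convexHull_inter {V F : Set E} (hF : IsExposed ℝ (convexHull ℝ V) F) :
    F = convexHull ℝ (V ∩ F) := by
  refine Subset.antisymm (fun x hx => ?_)
    (convexHull_min inter_subset_right (hF.convex (convex_convexHull ℝ V)))
  obtain ⟨l, rfl⟩ := hF ⟨x, hx⟩
  have hV : ∀ v ∈ V, l v ≤ l x := fun v hv => hx.2 v (subset_convexHull ℝ V hv)
  refine convexHull_mono ?_ (mem_convexHull_setOf_eq_of_forall_le (l := l.toLinearMap) hV hx.1 rfl)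
  rintro v ⟨hv, hvx⟩
  exact ⟨hv, subset_convexHull ℝ V hv, fun y hy => (hx.2 y hy).trans_eq hvx.symm⟩

theorem Set.Finite.setOf_isExposed_convexHull {V : Set E} (hV : V.Finite) :
    {F | IsExposed ℝ (convexHull ℝ V) F}.Finite := by
  refine Set.Finite.of_finite_image (f := (V ∩ ·)) (hV.finite_subsets.subset ?_) ?_
  · rintro _ ⟨F, -, rfl⟩
    exact inter_subset_left
  · intro F hF F' hF' h
    rw [hF.eq_convexHull_inter, hF'.eq_convexHull_inter]
    exact congrArg _ h

theorem isExposed_segment_of_forall_le {V : Set E} {l : E →L[ℝ] ℝ} {x y : E} (hx : x ∈ V)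
    (hy : y ∈ V) (hmax : ∀ v ∈ V, l v ≤ l x) (hyx : l y = l x)
    (hxy : ∀ v ∈ V, l v = l x → v = x ∨ v = y) :
    IsExposed ℝ (convexHull ℝ V) (segment ℝ x y) := by
  have hmaxP : ∀ z ∈ convexHull ℝ V, l z ≤ l x :=
    fun z hz => convexHull_min hmax (convex_halfSpace_le l.isLinear _) hz
  have hW : {v ∈ V | l v = l x} = {x, y} := by
    ext v
    refine ⟨fun hv => hxy v hv.1 hv.2, ?_⟩
    rintro (rfl | rfl)
    exacts [⟨hx, rfl⟩, ⟨hy, hyx⟩]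
  intro _
  refine ⟨l, Subset.antisymm (fun z hz => ⟨?_, fun w hw => ?_⟩) fun z hz => ?_⟩
  · rw [← convexHull_pair] at hz
    exact convexHull_mono (pair_subset hx hy) hz
  · have hlz : l z = l x := by
      rw [← convexHull_pair] at hz
      refine convexHull_min ?_ (convex_hyperplane l.isLinear _) hz
      rintro v (rfl | rfl)
      exacts [rfl, hyx]
    exact hlz ▸ hmaxP w hw
  · have hlz : l z = l x := (hmaxP z hz.1).antisymm (hz.2 x (subset_convexHull ℝ V hx))
    rw [← convexHull_pair, ← hW]
    exact mem_convexHull_setOf_eq_of_forall_le (l := l.toLinearMap) hmax hz.1 hlz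

end Convex

section Sym2Prod

variable {α β : Type*}

theorem Finset.disjoint_of_forall_eq {S T : Finset α} {f : α → β} {c d : β}
    (hS : ∀ x ∈ S, f x = c) (hT : ∀ y ∈ T, f y = d) (hcd : c ≠ d) : Disjoint S T :=
  Finset.disjoint_left.2 fun x hxS hxT => hcd ((hS x hxS).symm.trans (hT x hxT))

variable [DecidableEq α]

def Finset.sym2Prod (S T : Finset α) : Finset (Sym2 α) := (S ×ˢ T).image Sym2.mk.uncurry

theorem Finset.mem_sym2Prod {S T : Finset α} {z : Sym2 α} :
    z ∈ S.sym2Prod T ↔ ∃ x ∈ S, ∃ y ∈ T, s(x, y) = z := by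
  simp [Finset.sym2Prod]

theorem Finset.card_sym2Prod {S T : Finset α} (h : Disjoint S T) :
    (S.sym2Prod T).card = S.card * T.card := by
  rw [Finset.sym2Prod, Finset.card_image_of_injOn, Finset.card_product]
  rintro ⟨x, y⟩ hxy ⟨x', y'⟩ hxy' heq
  simp only [Finset.coe_product, Set.mem_prod, Finset.mem_coe] at hxy hxy'
  rcases Sym2.eq_iff.1 heq with ⟨rfl, rfl⟩ | ⟨rfl, rfl⟩
  · rfl
  · exact absurd hxy.1 (Finset.disjoint_right.1 h hxy'.2)

theorem Finset.map_eq_of_mem_sym2Prod {S T : Finset α} {f : α → β} {c d : β}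
    (hS : ∀ x ∈ S, f x = c) (hT : ∀ y ∈ T, f y = d) : ∀ z ∈ S.sym2Prod T, z.map f = s(c, d) := by
  intro z hz
  obtain ⟨x, hx, y, hy, rfl⟩ := Finset.mem_sym2Prod.1 hz
  rw [Sym2.map_mk, hS x hx, hT y hy]

end Sym2Prod

namespace EdgePolytope

variable {n : ℕ}

def edgeVec : Sym2 (Fin n) → Fin n → ℝ :=
  Sym2.lift ⟨fun i j => Pi.single i 1 + Pi.single j 1, fun _ _ => add_comm _ _⟩

@[simp]
theorem edgeVec_mk (i j : Fin n) : edgeVec s(i, j) = Pi.single i 1 + Pi.single j 1 := rfl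

theorem edgeVec_injective : Function.Injective (edgeVec (n := n)) := by
  have single_inj : ∀ {j l : Fin n}, (Pi.single j 1 : Fin n → ℝ) = Pi.single l 1 → j = l := by
    intro j l h
    by_contra hjl
    simpa [hjl] using congrFun h j
  intro e f h
  induction e using Sym2.ind with | _ i j => ?_
  induction f using Sym2.ind with | _ k l => ?_
  simp only [edgeVec_mk] at h
  have hi : i = k ∨ i = l := by
    by_contra! hne
    have := congrFun h i
    simp only [Pi.add_apply, Pi.single_apply, if_neg hne.1, if_neg hne.2] at this
    split_ifs at this <;> norm_num at this
  rcases hi with rfl | rfl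
  · rw [single_inj (add_left_cancel h)]
  · rw [add_comm (Pi.single k 1)] at h
    rw [single_inj (add_left_cancel h), Sym2.eq_swap]

theorem edgePolytope_eq (G : SimpleGraph (Fin n)) :
    edgePolytope G = convexHull ℝ (edgeVec '' G.edgeSet) := by
  refine congrArg (convexHull ℝ) (Set.ext fun x => ⟨?_, ?_⟩)
  · rintro ⟨i, j, hij, rfl⟩
    exact ⟨s(i, j), hij, rfl⟩
  · rintro ⟨e, he, rfl⟩
    induction e using Sym2.ind with | _ i j => exact ⟨i, j, he, rfl⟩

def edgeSeg : Sym2 (Sym2 (Fin n)) → Set (Fin n → ℝ) :=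
  Sym2.lift ⟨fun e f => segment ℝ (edgeVec e) (edgeVec f), fun _ _ => segment_symm ℝ _ _⟩

@[simp]
theorem edgeSeg_mk (e f : Sym2 (Fin n)) :
    edgeSeg s(e, f) = segment ℝ (edgeVec e) (edgeVec f) := rfl

theorem edgeSeg_injective : Function.Injective (edgeSeg (n := n)) := by
  intro p q h
  induction p using Sym2.ind with | _ e f => ?_
  induction q using Sym2.ind with | _ e' f' => ?_
  simp only [edgeSeg_mk] at h
  rw [Sym2.eq_iff]
  rcases eq_or_eq_of_segment_eq h with ⟨h₁, h₂⟩ | ⟨h₁, h₂⟩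
  · exact Or.inl ⟨edgeVec_injective h₁, edgeVec_injective h₂⟩
  · exact Or.inr ⟨edgeVec_injective h₁, edgeVec_injective h₂⟩

def IsPolyEdge (P F : Set (Fin n → ℝ)) : Prop :=
  IsExposed ℝ P F ∧ F.Nonempty ∧ polyDim F = 1

theorem card_le_faceCount_one (G : SimpleGraph (Fin n)) (S : Finset (Sym2 (Sym2 (Fin n))))
    (hS : ∀ p ∈ S, IsPolyEdge (edgePolytope G) (edgeSeg p)) :
    S.card ≤ faceCount (edgePolytope G) 1 := by
  have hfin : {F | IsPolyEdge (edgePolytope G) F}.Finite := by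
    rw [edgePolytope_eq]
    exact ((G.edgeSet.toFinite.image edgeVec).setOf_isExposed_convexHull).subset fun F hF => hF.1
  rw [← Set.ncard_coe_finset, ← Set.ncard_image_of_injective _ edgeSeg_injective]
  exact Set.ncard_le_ncard (by rintro _ ⟨p, hp, rfl⟩; exact hS p hp) hfin

def weightFunctional (w : Fin n → ℝ) : (Fin n → ℝ) →L[ℝ] ℝ :=
  ∑ t, w t • ContinuousLinearMap.proj t

theorem weightFunctional_edgeVec (w : Fin n → ℝ) (i j : Fin n) :
    weightFunctional w (edgeVec s(i, j)) = w i + w j := by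
  simp [weightFunctional, mul_add, Finset.sum_add_distrib, Pi.single_apply]

theorem isPolyEdge_of_weight {G : SimpleGraph (Fin n)} (w : Fin n → ℝ) {i j k l : Fin n}
    (hij : G.Adj i j) (hkl : G.Adj k l) (hne : s(i, j) ≠ s(k, l))
    (hmax : ∀ p q, G.Adj p q → w p + w q ≤ w i + w j) (hkl_eq : w k + w l = w i + w j)
    (huniq : ∀ p q, G.Adj p q → w p + w q = w i + w j → s(p, q) = s(i, j) ∨ s(p, q) = s(k, l)) :
    IsPolyEdge (edgePolytope G) (edgeSeg s(s(i, j), s(k, l))) := by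
  refine ⟨?_, ⟨_, left_mem_segment ℝ _ _⟩, finrank_vectorSpan_segment (edgeVec_injective.ne hne)⟩
  rw [edgePolytope_eq]
  refine isExposed_segment_of_forall_le (l := weightFunctional w) ⟨_, hij, rfl⟩ ⟨_, hkl, rfl⟩
    ?_ ?_ ?_
  · rintro _ ⟨e, he, rfl⟩
    induction e using Sym2.ind with | _ p q =>
    simpa only [weightFunctional_edgeVec] using hmax p q he
  · simpa only [weightFunctional_edgeVec] using hkl_eq
  · rintro _ ⟨e, he, rfl⟩ hv
    induction e using Sym2.ind with | _ p q =>
    simp only [weightFunctional_edgeVec] at hv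
    rcases huniq p q he hv with h | h <;> simp [h]

theorem isPolyEdge_star {G : SimpleGraph (Fin n)} {v x y : Fin n} (hx : G.Adj v x)
    (hy : G.Adj v y) (hxy : x ≠ y) :
    IsPolyEdge (edgePolytope G) (edgeSeg s(s(v, x), s(v, y))) := by
  have := hx.ne
  have := hy.ne
  -- the edges of maximal weight `3` are `vx` and `vy`
  let w : Fin n → ℝ := fun t => if t = v then 2 else if t = x ∨ t = y then 1 else 0
  refine isPolyEdge_of_weight w hx hy (by grind) (fun p q hpq => ?_) (by grind)
    fun p q hpq => ?_ <;> grind [hpq.ne]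

theorem isPolyEdge_of_not_adj {G : SimpleGraph (Fin n)} {i j k l : Fin n} (hij : G.Adj i j)
    (hkl : G.Adj k l) (hik : ¬G.Adj i k) (hil : ¬G.Adj i l) (hik' : i ≠ k) (hil' : i ≠ l)
    (hjk : j ≠ k) (hjl : j ≠ l) :
    IsPolyEdge (edgePolytope G) (edgeSeg s(s(i, j), s(k, l))) := by
  have := hij.ne
  have := hkl.ne
  -- an edge at `i` other than `ij` weighs at most `1`, as `i` has no neighbour in `{k, l}`;
  -- the other edges weigh at most `2`, with equality only for `kl`
  let w : Fin n → ℝ := fun t =>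
    if t = i then 2 else if t = j then 0 else if t = k ∨ t = l then 1 else -1
  refine isPolyEdge_of_weight w hij hkl (by grind) (fun p q hpq => ?_) (by grind)
    fun p q hpq => ?_ <;> grind [hpq.ne, hpq.symm]

variable (G : SimpleGraph (Fin n)) [DecidableRel G.Adj]

def starPairs : Finset (Sym2 (Sym2 (Fin n))) :=
  (Finset.univ.sigma fun v => (G.neighborFinset v).offDiag.image Sym2.mk.uncurry).image
    fun z => z.2.map (s(z.1, ·))

theorem mem_starPairs {p : Sym2 (Sym2 (Fin n))} :
    p ∈ starPairs G ↔ ∃ v x y, G.Adj v x ∧ G.Adj v y ∧ x ≠ y ∧ p = s(s(v, x), s(v, y)) := by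
  simp only [starPairs, Finset.mem_image, Finset.mem_sigma, Finset.mem_univ, true_and,
    Finset.mem_offDiag, SimpleGraph.mem_neighborFinset, Sigma.exists, Prod.exists]
  constructor
  · rintro ⟨v, _, ⟨x, y, ⟨hx, hy, hxy⟩, rfl⟩, rfl⟩
    exact ⟨v, x, y, hx, hy, hxy, rfl⟩
  · rintro ⟨v, x, y, hx, hy, hxy, rfl⟩
    exact ⟨v, _, ⟨x, y, ⟨hx, hy, hxy⟩, rfl⟩, rfl⟩

theorem card_starPairs : (starPairs G).card = ∑ v, (G.degree v).choose 2 := by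
  rw [starPairs, Finset.card_image_of_injOn, Finset.card_sigma]
  · simp [Sym2.card_image_offDiag]
  rintro ⟨v, z⟩ hz ⟨v', z'⟩ hz' h
  simp only [Finset.coe_sigma, Set.mem_sigma_iff, Finset.mem_coe, Finset.mem_image,
    Finset.mem_offDiag, SimpleGraph.mem_neighborFinset] at hz hz'
  obtain ⟨-, ⟨x, y⟩, ⟨hx, hy, hxy⟩, rfl⟩ := hz
  obtain ⟨-, ⟨x', y'⟩, ⟨hx', hy', hxy'⟩, rfl⟩ := hz'
  simp only [Function.uncurry_apply_pair, Sym2.map_mk, Sym2.eq_iff] at h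
  -- two distinct edges share at most one vertex
  have hv : v = v' := by grind [hx.ne, hy.ne, hx'.ne, hy'.ne]
  subst hv
  simp only [Function.uncurry_apply_pair, Sigma.mk.injEq, heq_eq_eq, true_and, Sym2.eq_iff]
  grind

theorem isPolyEdge_of_mem_starPairs {p : Sym2 (Sym2 (Fin n))} (hp : p ∈ starPairs G) :
    IsPolyEdge (edgePolytope G) (edgeSeg p) := by
  obtain ⟨v, x, y, hx, hy, hxy, rfl⟩ := (mem_starPairs G).1 hp
  exact isPolyEdge_star hx hy hxy

end EdgePolytope

namespace BlockGraph

open EdgePolytope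

variable {n : ℕ} (ρ : Fin n → Fin 3)

def blockAdj (r s : Fin 3) : Prop := if r = 2 ∨ s = 2 then r ≠ s else r = s

instance : DecidableRel blockAdj := fun r s => by unfold blockAdj; infer_instance

theorem blockAdj_symm : ∀ r s, blockAdj r s → blockAdj s r := by decide

theorem blockAdj_self : ∀ {r}, r ≠ 2 → blockAdj r r := by decide

theorem blockAdj_two : ∀ {r}, r ≠ 2 → blockAdj r 2 := by decide

def blockGraph : SimpleGraph (Fin n) where
  Adj u v := u ≠ v ∧ blockAdj (ρ u) (ρ v)
  symm := ⟨fun _ _ h => ⟨h.1.symm, blockAdj_symm _ _ h.2⟩⟩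
  loopless := ⟨fun _ h => h.1 rfl⟩

instance : DecidableRel (blockGraph ρ).Adj := fun u v =>
  inferInstanceAs (Decidable (u ≠ v ∧ blockAdj (ρ u) (ρ v)))

def block (r : Fin 3) : Finset (Fin n) := Finset.univ.filter (ρ · = r)

@[simp]
theorem mem_block {r : Fin 3} {v : Fin n} : v ∈ block ρ r ↔ ρ v = r := by simp [block]

theorem ne_of_block_ne {u v : Fin n} {r s : Fin 3} (hu : ρ u = r) (hv : ρ v = s)
    (h : r ≠ s := by decide) : u ≠ v := by
  rintro rfl
  exact h (hu ▸ hv)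

theorem blockGraph_adj_of_eq {u v : Fin n} {r s : Fin 3} (hu : ρ u = r) (hv : ρ v = s)
    (hne : u ≠ v) (h : blockAdj r s := by decide) : (blockGraph ρ).Adj u v :=
  ⟨hne, hu ▸ hv ▸ h⟩

theorem blockGraph_not_adj_of_eq {u v : Fin n} {r s : Fin 3} (hu : ρ u = r) (hv : ρ v = s)
    (h : ¬blockAdj r s := by decide) : ¬(blockGraph ρ).Adj u v :=
  fun huv => h (hu ▸ hv ▸ huv.2)

theorem exists_adj_blockGraph (h₀ : (block ρ 0).Nonempty) (h₂ : (block ρ 2).Nonempty)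
    (v : Fin n) : ∃ w, (blockGraph ρ).Adj v w := by
  by_cases hv : ρ v = 2
  · obtain ⟨w, hw⟩ := h₀
    rw [mem_block] at hw
    exact ⟨w, blockGraph_adj_of_eq ρ hv hw (ne_of_block_ne ρ hv hw)⟩
  · obtain ⟨w, hw⟩ := h₂
    rw [mem_block] at hw
    exact ⟨w, fun h => hv (h ▸ hw), hw ▸ blockAdj_two hv⟩

theorem card_block_add_card_block_le_degree {v : Fin n} (hv : ρ v = 2) :
    (block ρ 0).card + (block ρ 1).card ≤ (blockGraph ρ).degree v := by
  rw [← SimpleGraph.card_neighborFinset_eq_degree,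
    ← Finset.card_union_of_disjoint (Finset.disjoint_left.2 fun u h₀ h₁ => by simp_all)]
  refine Finset.card_le_card fun u hu => ?_
  simp only [Finset.mem_union, mem_block] at hu
  rw [SimpleGraph.mem_neighborFinset]
  rcases hu with hu | hu
  · exact blockGraph_adj_of_eq ρ hv hu (ne_of_block_ne ρ hv hu)
  · exact blockGraph_adj_of_eq ρ hv hu (ne_of_block_ne ρ hv hu)

theorem card_block_add_card_block_sub_one_le_degree {v : Fin n} (hv : ρ v ≠ 2) :
    (block ρ (ρ v)).card + (block ρ 2).card - 1 ≤ (blockGraph ρ).degree v := by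
  have hmem : v ∈ block ρ (ρ v) ∪ block ρ 2 := by simp
  rw [← SimpleGraph.card_neighborFinset_eq_degree,
    ← Finset.card_union_of_disjoint (Finset.disjoint_left.2 fun u h₀ h₁ => by simp_all),
    ← Finset.card_erase_of_mem hmem]
  refine Finset.card_le_card fun u hu => ?_
  simp only [Finset.mem_erase, Finset.mem_union, mem_block] at hu
  rw [SimpleGraph.mem_neighborFinset]
  rcases hu with ⟨hne, hu | hu⟩
  · exact ⟨hne.symm, by rw [hu]; exact blockAdj_self hv⟩
  · exact ⟨hne.symm, by rw [hu]; exact blockAdj_two hv⟩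

theorem le_sum_choose_degree_blockGraph {a b c : ℕ} (ha : (block ρ 0).card = a)
    (hb : (block ρ 1).card = b) (hc : (block ρ 2).card = c) :
    a * (a + c - 1).choose 2 + b * (b + c - 1).choose 2 + c * (a + b).choose 2 ≤
      ∑ v, ((blockGraph ρ).degree v).choose 2 := by
  subst ha hb hc
  rw [← Finset.sum_fiberwise Finset.univ ρ, Fin.sum_univ_three]
  have hblock : ∀ r k, (∀ v, ρ v = r → k ≤ (blockGraph ρ).degree v) →
      (block ρ r).card * k.choose 2 ≤ ∑ v ∈ block ρ r, ((blockGraph ρ).degree v).choose 2 :=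
    fun r k h => Finset.card_nsmul_le_sum _ _ _ fun v hv =>
      Nat.choose_le_choose 2 (h v ((mem_block ρ).1 hv))
  gcongr
  · exact hblock 0 _ fun v hv =>
      hv ▸ card_block_add_card_block_sub_one_le_degree ρ (by simp [hv])
  · exact hblock 1 _ fun v hv =>
      hv ▸ card_block_add_card_block_sub_one_le_degree ρ (by simp [hv])
  · exact hblock 2 _ fun v hv => card_block_add_card_block_le_degree ρ hv

def innerEdges (r : Fin 3) : Finset (Sym2 (Fin n)) := (block ρ r).offDiag.image Sym2.mk.uncurry

theorem mem_innerEdges {r : Fin 3} {e : Sym2 (Fin n)} :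
    e ∈ innerEdges ρ r ↔ ∃ i j, ρ i = r ∧ ρ j = r ∧ i ≠ j ∧ s(i, j) = e := by
  simp [innerEdges, and_assoc]

theorem card_innerEdges (r : Fin 3) : (innerEdges ρ r).card = (block ρ r).card.choose 2 :=
  Sym2.card_image_offDiag _

theorem map_eq_of_mem_innerEdges (r : Fin 3) : ∀ e ∈ innerEdges ρ r, e.map ρ = s(r, r) := by
  intro e he
  obtain ⟨i, j, hi, hj, -, rfl⟩ := (mem_innerEdges ρ).1 he
  rw [Sym2.map_mk, hi, hj]

theorem map_eq_of_mem_sym2Prod_block (r s : Fin 3) :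
    ∀ e ∈ (block ρ r).sym2Prod (block ρ s), e.map ρ = s(r, s) :=
  Finset.map_eq_of_mem_sym2Prod (fun _ => (mem_block ρ).1) (fun _ => (mem_block ρ).1)

def crossPairs : Finset (Sym2 (Sym2 (Fin n))) :=
  (innerEdges ρ 0).sym2Prod (innerEdges ρ 1) ∪
    (innerEdges ρ 0).sym2Prod ((block ρ 1).sym2Prod (block ρ 2)) ∪
    (innerEdges ρ 1).sym2Prod ((block ρ 0).sym2Prod (block ρ 2))

-- Pairs of graph edges from different families are told apart by the blocks of their endpoints.
theorem map_map_of_mem_crossPairs :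
    (∀ z ∈ (innerEdges ρ 0).sym2Prod (innerEdges ρ 1),
        z.map (Sym2.map ρ) = s(s(0, 0), s(1, 1))) ∧
      (∀ z ∈ (innerEdges ρ 0).sym2Prod ((block ρ 1).sym2Prod (block ρ 2)),
        z.map (Sym2.map ρ) = s(s(0, 0), s(1, 2))) ∧
      ∀ z ∈ (innerEdges ρ 1).sym2Prod ((block ρ 0).sym2Prod (block ρ 2)),
        z.map (Sym2.map ρ) = s(s(1, 1), s(0, 2)) :=
  ⟨Finset.map_eq_of_mem_sym2Prod (map_eq_of_mem_innerEdges ρ 0) (map_eq_of_mem_innerEdges ρ 1),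
    Finset.map_eq_of_mem_sym2Prod (map_eq_of_mem_innerEdges ρ 0)
      (map_eq_of_mem_sym2Prod_block ρ 1 2),
    Finset.map_eq_of_mem_sym2Prod (map_eq_of_mem_innerEdges ρ 1)
      (map_eq_of_mem_sym2Prod_block ρ 0 2)⟩

theorem card_crossPairs {a b c : ℕ} (ha : (block ρ 0).card = a) (hb : (block ρ 1).card = b)
    (hc : (block ρ 2).card = c) :
    (crossPairs ρ).card =
      a.choose 2 * b.choose 2 + a.choose 2 * (b * c) + b.choose 2 * (a * c) := by
  have hblock : ∀ r s : Fin 3, r ≠ s → Disjoint (block ρ r) (block ρ s) := fun r s =>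
    Finset.disjoint_of_forall_eq (fun _ => (mem_block ρ).1) (fun _ => (mem_block ρ).1)
  obtain ⟨h₁, h₂, h₃⟩ := map_map_of_mem_crossPairs ρ
  rw [crossPairs, Finset.card_union_of_disjoint, Finset.card_union_of_disjoint,
    Finset.card_sym2Prod, Finset.card_sym2Prod, Finset.card_sym2Prod, Finset.card_sym2Prod,
    Finset.card_sym2Prod, card_innerEdges, card_innerEdges, ha, hb, hc]
  all_goals first
    | exact hblock _ _ (by decide)
    | exact Finset.disjoint_of_forall_eq (map_eq_of_mem_innerEdges ρ _)
        (map_eq_of_mem_innerEdges ρ _) (by decide)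
    | exact Finset.disjoint_of_forall_eq (map_eq_of_mem_innerEdges ρ _)
        (map_eq_of_mem_sym2Prod_block ρ _ _) (by decide)
    | exact Finset.disjoint_of_forall_eq h₁ h₂ (by decide)
    | exact Finset.disjoint_union_left.2 ⟨Finset.disjoint_of_forall_eq h₁ h₃ (by decide),
        Finset.disjoint_of_forall_eq h₂ h₃ (by decide)⟩

theorem disjoint_starPairs_crossPairs : Disjoint (starPairs (blockGraph ρ)) (crossPairs ρ) := by
  have hstar : ∀ r r₁ r₂ : Fin 3, s(s(r, r₁), s(r, r₂)) ≠ s(s(0, 0), s(1, 1)) ∧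
      s(s(r, r₁), s(r, r₂)) ≠ s(s(0, 0), s(1, 2)) ∧
      s(s(r, r₁), s(r, r₂)) ≠ s(s(1, 1), s(0, 2)) := by
    decide
  obtain ⟨h₁, h₂, h₃⟩ := map_map_of_mem_crossPairs ρ
  refine Finset.disjoint_left.2 fun z hz hcross => ?_
  obtain ⟨v, x, y, -, -, -, rfl⟩ := (mem_starPairs _).1 hz
  obtain ⟨k₁, k₂, k₃⟩ := hstar (ρ v) (ρ x) (ρ y)
  simp only [crossPairs, Finset.mem_union] at hcross
  rcases hcross with (hz | hz) | hz
  · exact k₁ (by simpa only [Sym2.map_mk] using h₁ _ hz)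
  · exact k₂ (by simpa only [Sym2.map_mk] using h₂ _ hz)
  · exact k₃ (by simpa only [Sym2.map_mk] using h₃ _ hz)

theorem isPolyEdge_of_mem_crossPairs {z : Sym2 (Sym2 (Fin n))} (hz : z ∈ crossPairs ρ) :
    IsPolyEdge (edgePolytope (blockGraph ρ)) (edgeSeg z) := by
  simp only [crossPairs, Finset.mem_union] at hz
  rcases hz with (hz | hz) | hz <;> obtain ⟨e, he, f, hf, rfl⟩ := Finset.mem_sym2Prod.1 hz <;>
    obtain ⟨i, j, hi, hj, hij, rfl⟩ := (mem_innerEdges ρ).1 he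
  · obtain ⟨k, l, hk, hl, hkl, rfl⟩ := (mem_innerEdges ρ).1 hf
    exact isPolyEdge_of_not_adj (blockGraph_adj_of_eq ρ hi hj hij)
      (blockGraph_adj_of_eq ρ hk hl hkl) (blockGraph_not_adj_of_eq ρ hi hk)
      (blockGraph_not_adj_of_eq ρ hi hl) (ne_of_block_ne ρ hi hk) (ne_of_block_ne ρ hi hl)
      (ne_of_block_ne ρ hj hk) (ne_of_block_ne ρ hj hl)
  all_goals
    obtain ⟨k, hk, l, hl, rfl⟩ := Finset.mem_sym2Prod.1 hf
    rw [mem_block] at hk hl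
    rw [Sym2.eq_swap]
    exact isPolyEdge_of_not_adj (blockGraph_adj_of_eq ρ hk hl (ne_of_block_ne ρ hk hl))
      (blockGraph_adj_of_eq ρ hi hj hij) (blockGraph_not_adj_of_eq ρ hk hi)
      (blockGraph_not_adj_of_eq ρ hk hj) (ne_of_block_ne ρ hk hi) (ne_of_block_ne ρ hk hj)
      (ne_of_block_ne ρ hl hi) (ne_of_block_ne ρ hl hj)

theorem le_faceCount_blockGraph {a b c : ℕ} (ha : (block ρ 0).card = a)
    (hb : (block ρ 1).card = b) (hc : (block ρ 2).card = c) :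
    a * (a + c - 1).choose 2 + b * (b + c - 1).choose 2 + c * (a + b).choose 2 +
        (a.choose 2 * b.choose 2 + a.choose 2 * (b * c) + b.choose 2 * (a * c)) ≤
      faceCount (edgePolytope (blockGraph ρ)) 1 :=
  calc _ ≤ (starPairs (blockGraph ρ)).card + (crossPairs ρ).card := by
        rw [card_starPairs, card_crossPairs ρ ha hb hc]
        exact Nat.add_le_add_right (le_sum_choose_degree_blockGraph ρ ha hb hc) _
    _ = (starPairs (blockGraph ρ) ∪ crossPairs ρ).card :=
        (Finset.card_union_of_disjoint (disjoint_starPairs_crossPairs ρ)).symm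
    _ ≤ faceCount (edgePolytope (blockGraph ρ)) 1 :=
        card_le_faceCount_one _ _ fun _ hz => (Finset.mem_union.1 hz).elim
          (isPolyEdge_of_mem_starPairs _) (isPolyEdge_of_mem_crossPairs ρ)

def consecutiveBlocks (a : ℕ) (i : Fin n) : Fin 3 :=
  if i.val < a then 0 else if i.val < 2 * a then 1 else 2

theorem card_block_consecutiveBlocks {a : ℕ} (h : 2 * a ≤ n) (r : Fin 3) :
    (block (consecutiveBlocks (n := n) a) r).card = ![a, a, n - 2 * a] r := by
  have hIco : (block (consecutiveBlocks (n := n) a) r).map Fin.valEmbedding =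
      Finset.Ico (![0, a, 2 * a] r) (![a, 2 * a, n] r) := by
    ext m
    simp only [Finset.mem_map, mem_block, Fin.valEmbedding_apply, Finset.mem_Ico]
    constructor
    · rintro ⟨i, hi, rfl⟩
      fin_cases r <;> simp [consecutiveBlocks] at hi ⊢ <;> split_ifs at hi <;> grind
    · intro hm
      refine ⟨⟨m, ?_⟩, ?_, rfl⟩
      · fin_cases r <;> (simp at hm; omega)
      · fin_cases r <;> simp [consecutiveBlocks] at hm ⊢ <;> split_ifs <;> grind
  rw [← Finset.card_map, hIco, Nat.card_Ico]
  fin_cases r <;> simp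
  omega

end BlockGraph

open BlockGraph

-- for `n = 2a + c` the constraints on `c` say `7a ≤ 3n < 7a + 7`, i.e. `a = ⌊3n/7⌋`
theorem two_mul_add_pow_four_le {a c : ℕ} (ha : 2 ≤ a) (h₁ : a ≤ 3 * c) (h₂ : 3 * c ≤ a + 6) :
    (2 * a + c) ^ 4 ≤ 54 * (a * (a + c - 1).choose 2 + a * (a + c - 1).choose 2 +
      c * (a + a).choose 2 + (a.choose 2 * a.choose 2 + a.choose 2 * (a * c) +
        a.choose 2 * (a * c))) := by
  have ha' : (2 : ℝ) ≤ a := by exact_mod_cast ha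
  have h₁' : (a : ℝ) ≤ 3 * c := by exact_mod_cast h₁
  have h₂' : (3 * c : ℝ) ≤ a + 6 := by exact_mod_cast h₂
  rw [← Nat.cast_le (α := ℝ)]
  push_cast [Nat.cast_choose_two, Nat.cast_sub (show 1 ≤ a + c by omega)]
  nlinarith [mul_nonneg (sub_nonneg.2 ha') (sub_nonneg.2 h₁'),
    mul_nonneg (sub_nonneg.2 ha') (sub_nonneg.2 h₂'),
    mul_nonneg (sub_nonneg.2 h₁') (sub_nonneg.2 h₂'),
    sq_nonneg ((a : ℝ) - 2), sq_nonneg (3 * (c : ℝ) - a),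
    mul_nonneg (mul_nonneg (sub_nonneg.2 ha') (sub_nonneg.2 h₁')) (sub_nonneg.2 h₂')]

/-- For every integer `n ≥ 6` there is a graph `G` on `n` vertices with no isolated
vertices whose edge polytope `P(G)` has at least `n⁴ / 54` edges (1-dimensional faces). -/
theorem exists_graph_many_polytope_edges (n : ℕ) (hn : 6 ≤ n) :
    ∃ G : SimpleGraph (Fin n), (∀ v : Fin n, ∃ w : Fin n, G.Adj v w) ∧
      ((n : ℝ) ^ 4 / 54 ≤ (faceCount (edgePolytope G) 1 : ℝ)) := by
  set a := 3 * n / 7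
  let ρ : Fin n → Fin 3 := consecutiveBlocks a
  have hcard := card_block_consecutiveBlocks (n := n) (show 2 * a ≤ n by omega)
  have ha : (block ρ 0).card = a := by simpa using hcard 0
  have hb : (block ρ 1).card = a := by simpa using hcard 1
  have hc : (block ρ 2).card = n - 2 * a := by simpa using hcard 2
  refine ⟨blockGraph ρ,
    exists_adj_blockGraph _ (Finset.card_pos.1 (by omega)) (Finset.card_pos.1 (by omega)), ?_⟩
  have hcount := le_faceCount_blockGraph _ ha hb hc
  have harith := two_mul_add_pow_four_le (a := a) (c := n - 2 * a) (by omega) (by omega) (by omega)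
  rw [show 2 * a + (n - 2 * a) = n by omega] at harith
  rw [div_le_iff₀ (by norm_num), mul_comm]
  exact_mod_cast harith.trans (Nat.mul_le_mul_left 54 hcount)
end

section
/- For every ε > 0 there exists N such that for all n ≥ N and every finite simple graph G on n vertices with no isolated vertices, the number of edges (1-dimensional faces) of the edge polytope P(G) is at most (1/32 + ε)·n⁴. -/
open Set

namespace EdgePolyAux

attribute [local instance] Classical.propDecidable

open Finset

variable {n : ℕ}

/-- An "edge vector": the sum of two distinct standard basis vectors. -/
def IsEV (x : Fin n → ℝ) : Prop :=
  ∃ i j : Fin n, i ≠ j ∧ x = Pi.single i 1 + Pi.single j 1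

lemma ev_apply (i j k : Fin n) :
    ((Pi.single i 1 + Pi.single j 1 : Fin n → ℝ)) k
      = (if k = i then 1 else 0) + (if k = j then 1 else 0) := by
  simp [Pi.single_apply]

lemma ev_vals {x : Fin n → ℝ} (hx : IsEV x) (k : Fin n) : x k = 0 ∨ x k = 1 := by
  obtain ⟨i, j, hij, rfl⟩ := hx
  rw [ev_apply]
  by_cases h1 : k = i <;> by_cases h2 : k = j
  · exact absurd (h1.symm.trans h2) hij
  · right; simp [h1, h2, hij]
  · right; simp [h1, h2, hij.symm]
  · left; simp [h1, h2]

lemma ev_one_iff {i j k : Fin n} (hij : i ≠ j) :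
    ((Pi.single i 1 + Pi.single j 1 : Fin n → ℝ)) k = 1 ↔ (k = i ∨ k = j) := by
  rw [ev_apply]
  by_cases h1 : k = i <;> by_cases h2 : k = j
  · exact absurd (h1.symm.trans h2) hij
  · simp [h1, h2, hij]
  · simp [h1, h2, hij.symm]
  · simp [h1, h2]

lemma ev_eq_of_supp {i j a b : Fin n} (hij : i ≠ j) (hab : a ≠ b)
    (hi : i = a ∨ i = b) (hj : j = a ∨ j = b) :
    (Pi.single i 1 + Pi.single j 1 : Fin n → ℝ) = Pi.single a 1 + Pi.single b 1 := by
  rcases hi with rfl | rfl <;> rcases hj with rfl | rfl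
  · exact absurd rfl hij
  · rfl
  · exact add_comm _ _
  · exact absurd rfl hij

lemma ev_coord {x y : Fin n → ℝ} (hx : IsEV x) (hy : IsEV y) (hxy : x ≠ y) :
    ∃ k, x k = 1 ∧ y k = 0 := by
  obtain ⟨i, j, hij, rfl⟩ := hx
  obtain ⟨a, b, hab, rfl⟩ := hy
  by_cases hi : i = a ∨ i = b
  · by_cases hj : j = a ∨ j = b
    · exact absurd (ev_eq_of_supp hij hab hi hj) hxy
    · push_neg at hj
      refine ⟨j, ?_, ?_⟩
      · rw [ev_one_iff hij]; right; rfl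
      · rw [ev_apply]; simp [hj.1, hj.2]
  · push_neg at hi
    refine ⟨i, ?_, ?_⟩
    · rw [ev_one_iff hij]; left; rfl
    · rw [ev_apply]; simp [hi.1, hi.2]

lemma ev_no_three {x y z : Fin n → ℝ} (hx : IsEV x) (hy : IsEV y) (hz : IsEV z)
    (hxy : x ≠ y) (hzx : z ≠ x) (hzy : z ≠ y) {t : ℝ}
    (h : z - x = t • (y - x)) : False := by
  obtain ⟨k, hk1, hk0⟩ := ev_coord hx hy hxy
  have hk := congrFun h k
  simp only [Pi.sub_apply, Pi.smul_apply, smul_eq_mul, hk1, hk0] at hk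
  -- hk : z k - 1 = t * (0 - 1)
  rcases ev_vals hz k with h0 | h1
  · -- then t = 1, so z = y
    have ht : t = 1 := by rw [h0] at hk; linarith
    apply hzy
    have : z - x = y - x := by rw [h, ht, one_smul]
    have := sub_left_inj.mp this
    exact this
  · -- then t = 0, so z = x
    have ht : t = 0 := by rw [h1] at hk; linarith
    apply hzx
    have : z - x = 0 := by rw [h, ht, zero_smul]
    exact sub_eq_zero.mp this

variable (G : SimpleGraph (Fin n))

/-- The vertex set of the edge polytope. -/
def S : Set (Fin n → ℝ) :=
  {x | ∃ i j : Fin n, G.Adj i j ∧ x = Pi.single i 1 + Pi.single j 1}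

lemma edgePolytope_eq : edgePolytope G = convexHull ℝ (S G) := rfl

lemma S_ev {x : Fin n → ℝ} (hx : x ∈ S G) : IsEV x := by
  obtain ⟨i, j, h, rfl⟩ := hx
  exact ⟨i, j, h.ne, rfl⟩

/-- The vector associated to an unordered pair. -/
def phi (e : Sym2 (Fin n)) : Fin n → ℝ :=
  Sym2.lift ⟨fun i j => Pi.single i 1 + Pi.single j 1, fun _ _ => add_comm _ _⟩ e

lemma phi_mk (i j : Fin n) : phi s(i,j) = Pi.single i 1 + Pi.single j 1 := rfl

lemma phi_mem_S {e : Sym2 (Fin n)} (he : e ∈ G.edgeSet) : phi e ∈ S G := by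
  induction e with
  | _ i j => exact ⟨i, j, he, rfl⟩

lemma mem_S_iff {x : Fin n → ℝ} : x ∈ S G ↔ ∃ e ∈ G.edgeFinset, phi e = x := by
  constructor
  · rintro ⟨i, j, h, rfl⟩
    exact ⟨s(i,j), by simpa [SimpleGraph.mem_edgeFinset] using h, rfl⟩
  · rintro ⟨e, he, rfl⟩
    exact phi_mem_S G (SimpleGraph.mem_edgeFinset.mp he)

lemma phi_inj {e f : Sym2 (Fin n)} (he : e ∈ G.edgeSet) (hf : f ∈ G.edgeSet)
    (h : phi e = phi f) : e = f := by
  induction e with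
  | _ i j =>
    induction f with
    | _ a b =>
      rw [SimpleGraph.mem_edgeSet] at he hf
      have hij : i ≠ j := he.ne
      have hab : a ≠ b := hf.ne
      rw [phi_mk, phi_mk] at h
      have hi : i = a ∨ i = b := by
        rw [← ev_one_iff hab, ← h, ev_one_iff hij]; left; rfl
      have hj : j = a ∨ j = b := by
        rw [← ev_one_iff hab, ← h, ev_one_iff hij]; right; rfl
      rw [Sym2.eq_iff]
      rcases hi with rfl | rfl <;> rcases hj with rfl | rfl
      · exact absurd rfl hij
      · left; exact ⟨rfl, rfl⟩
      · right; exact ⟨rfl, rfl⟩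
      · exact absurd rfl hij

lemma face_struct {F : Set (Fin n → ℝ)} (hF : IsExposed ℝ (edgePolytope G) F)
    (hne : F.Nonempty) (hdim : polyDim F = 1) :
    ∃ p q : Fin n → ℝ, p ∈ S G ∧ q ∈ S G ∧ p ≠ q ∧ S G ∩ F = {p, q} ∧
      F = convexHull ℝ {p, q} ∧
      ∀ p' q' : Fin n → ℝ, p' ∈ S G → q' ∈ S G → p' + q' = p + q →
        (p' = p ∧ q' = q) ∨ (p' = q ∧ q' = p) := by
  obtain ⟨l, hFeq⟩ := hF hne
  have hPF : F ⊆ edgePolytope G := by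
    rw [hFeq]; exact fun x hx => hx.1
  have hSP : S G ⊆ edgePolytope G := subset_convexHull ℝ _
  have hmax : ∀ x ∈ F, ∀ y ∈ edgePolytope G, l y ≤ l x := by
    intro x hx
    rw [hFeq] at hx
    exact hx.2
  have hmemF : ∀ z ∈ edgePolytope G, ∀ x ∈ F, l z = l x → z ∈ F := by
    intro z hz x hx he
    rw [hFeq]
    exact ⟨hz, fun y hy => (hmax x hx y hy).trans_eq he.symm⟩
  have hcv : Convex ℝ F := by
    rw [hFeq]
    exact fun u hu v hv a b ha hb hab =>
      ⟨(convex_convexHull ℝ _) hu.1 hv.1 ha hb hab,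
        fun y hy => by
          calc l y = a * l y + b * l y := by rw [← add_mul, hab, one_mul]
          _ ≤ a * l u + b * l v := by
              gcongr
              exacts [hu.2 y hy, hv.2 y hy]
          _ = l (a • u + b • v) := by simp [map_add, map_smul]⟩
  -- the exposed face is the hull of its vertices
  have hull : F = convexHull ℝ (S G ∩ F) := by
    apply Set.Subset.antisymm
    · intro x hx
      have hxP : x ∈ convexHull ℝ (S G) := hPF hx
      rw [_root_.convexHull_eq] at hxP
      obtain ⟨ι, t, w, z, hw0, hw1, hz, hcm⟩ := hxP
      have hxval : x = ∑ i ∈ t, w i • z i := by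
        rw [← hcm, Finset.centerMass_eq_of_sum_1 _ _ hw1]
      have hlx : l x = ∑ i ∈ t, w i * l (z i) := by
        rw [hxval, map_sum]
        simp [map_smul]
      have hsum0 : ∑ i ∈ t, w i * (l x - l (z i)) = 0 := by
        have hd : ∑ i ∈ t, w i * (l x - l (z i))
            = (∑ i ∈ t, w i) * l x - ∑ i ∈ t, w i * l (z i) := by
          simp only [mul_sub, Finset.sum_sub_distrib, Finset.sum_mul]
        rw [hd, hw1, ← hlx]; ring
      have hkey : ∀ i ∈ t, w i * (l x - l (z i)) = 0 := by
        refine (Finset.sum_eq_zero_iff_of_nonneg ?_).mp hsum0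
        intro i hi
        exact mul_nonneg (hw0 i hi)
          (sub_nonneg.2 (hmax x hx (z i) (hSP (hz i hi))))
      have hzF : ∀ i ∈ t, w i ≠ 0 → z i ∈ S G ∩ F := by
        intro i hi hwi
        refine ⟨hz i hi, hmemF (z i) (hSP (hz i hi)) x hx ?_⟩
        have := hkey i hi
        rcases mul_eq_zero.mp this with h | h
        · exact absurd h hwi
        · linarith [sub_eq_zero.mp h]
      have hx2 : x = (t.filter fun i => w i ≠ 0).centerMass w z := by
        rw [Finset.centerMass_filter_ne_zero, hcm]
      rw [hx2]
      apply Finset.centerMass_mem_convexHull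
      · exact fun i hi => hw0 i (Finset.mem_filter.mp hi).1
      · rw [Finset.sum_filter_ne_zero, hw1]
        exact one_pos
      · intro i hi
        obtain ⟨hit, hwi⟩ := Finset.mem_filter.mp hi
        exact hzF i hit hwi
    · exact convexHull_min inter_subset_right hcv
  -- two distinct points in `S G ∩ F`
  have hnontriv : (S G ∩ F).Nontrivial := by
    rw [Set.not_subsingleton_iff.symm]
    intro hss
    rcases hss.eq_empty_or_singleton with h | ⟨p, h⟩
    · rw [h, convexHull_empty] at hull
      exact hne.ne_empty hull
    · rw [h, convexHull_singleton] at hull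
      rw [polyDim, hull, vectorSpan_singleton] at hdim
      simp at hdim
  obtain ⟨p, hp, q, hq, hpq⟩ := hnontriv
  have hpF : p ∈ F := hp.2
  have hqF : q ∈ F := hq.2
  -- `S G ∩ F` has at most the two elements p, q
  have hsub : S G ∩ F ⊆ {p, q} := by
    intro r hr
    by_contra hrpq
    rw [Set.mem_insert_iff, Set.mem_singleton_iff] at hrpq
    push_neg at hrpq
    obtain ⟨hrp, hrq⟩ := hrpq
    -- r - p is a multiple of q - p inside vectorSpan F
    have hu : q - p ∈ vectorSpan ℝ F := by
      have := vsub_mem_vectorSpan ℝ hqF hpF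
      simpa [vsub_eq_sub] using this
    have hv : r - p ∈ vectorSpan ℝ F := by
      have := vsub_mem_vectorSpan ℝ hr.2 hpF
      simpa [vsub_eq_sub] using this
    have hu0 : q - p ≠ 0 := sub_ne_zero.2 (Ne.symm hpq)
    have hspan : (ℝ ∙ (q - p)) = vectorSpan ℝ F := by
      apply Submodule.eq_of_le_of_finrank_le
      · rw [Submodule.span_singleton_le_iff_mem]; exact hu
      · rw [finrank_span_singleton hu0]
        exact le_of_eq hdim
    rw [← hspan] at hv
    obtain ⟨t, ht⟩ := Submodule.mem_span_singleton.mp hv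
    exact ev_no_three (S_ev G hp.1) (S_ev G hq.1) (S_ev G hr.1) hpq hrp hrq
      (by rw [← ht])
  have hSF : S G ∩ F = {p, q} := by
    apply Set.Subset.antisymm hsub
    intro x hx
    rcases hx with rfl | hx
    · exact hp
    · rw [Set.mem_singleton_iff] at hx; subst hx; exact hq
  refine ⟨p, q, hp.1, hq.1, hpq, hSF, by rw [hull, hSF], ?_⟩
  -- uniqueness of the decomposition
  intro p' q' hp' hq' hsum
  have hlq : l q = l p := le_antisymm (hmax p hpF q (hPF hqF)) (hmax q hqF p (hPF hpF))
  have hlp' : l p' ≤ l p := hmax p hpF p' (hSP hp')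
  have hlq' : l q' ≤ l p := hmax p hpF q' (hSP hq')
  have hsum' : l p' + l q' = l p + l q := by
    rw [← map_add, ← map_add, hsum]
  have hep' : l p' = l p := by linarith
  have heq' : l q' = l p := by linarith
  have hp'F : p' ∈ S G ∩ F := ⟨hp', hmemF p' (hSP hp') p hpF hep'⟩
  have hq'F : q' ∈ S G ∩ F := ⟨hq', hmemF q' (hSP hq') p hpF heq'⟩
  rw [hSF, Set.mem_insert_iff, Set.mem_singleton_iff] at hp'F hq'F
  rcases hp'F with h1 | h1
  · left
    refine ⟨h1, ?_⟩
    rw [h1] at hsum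
    exact add_left_cancel hsum
  · right
    refine ⟨h1, ?_⟩
    rw [h1] at hsum
    have h2 : p + q = q + p := add_comm _ _
    rw [h2] at hsum
    exact add_left_cancel hsum

/-- A pair of edges has a "conflict" if their vector sum has another decomposition. -/
def Conf (e f : Sym2 (Fin n)) : Prop :=
  ∃ e' ∈ G.edgeFinset, ∃ f' ∈ G.edgeFinset,
    phi e' + phi f' = phi e + phi f ∧ e' ≠ e ∧ e' ≠ f

/-- Ordered pairs of distinct edges. -/
noncomputable def DP : Finset (Sym2 (Fin n) × Sym2 (Fin n)) :=
  (G.edgeFinset ×ˢ G.edgeFinset).filter fun x => x.1 ≠ x.2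

noncomputable def GoodE : Finset (Sym2 (Fin n) × Sym2 (Fin n)) :=
  (DP G).filter fun x => ¬ Conf G x.1 x.2

noncomputable def BadE : Finset (Sym2 (Fin n) × Sym2 (Fin n)) :=
  (DP G).filter fun x => Conf G x.1 x.2

noncomputable def GoodU : Finset (Finset (Sym2 (Fin n))) :=
  (GoodE G).image fun x => ({x.1, x.2} : Finset (Sym2 (Fin n)))

lemma inter_eq (F : Set (Fin n → ℝ)) :
    S G ∩ F = phi '' ↑(G.edgeFinset.filter fun e => phi e ∈ F) := by
  ext x
  constructor
  · rintro ⟨hxS, hxF⟩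
    obtain ⟨e, he, rfl⟩ := (mem_S_iff G).1 hxS
    exact ⟨e, Finset.mem_coe.mpr (Finset.mem_filter.mpr ⟨he, hxF⟩), rfl⟩
  · rintro ⟨e, he, rfl⟩
    simp only [Finset.coe_filter, Set.mem_setOf_eq] at he
    exact ⟨phi_mem_S G (SimpleGraph.mem_edgeFinset.mp he.1), he.2⟩

lemma step1 : faceCount (edgePolytope G) 1 ≤ (GoodU G).card := by
  rw [faceCount, ← Set.ncard_coe_finset]
  apply Set.ncard_le_ncard_of_injOn
    (fun F => G.edgeFinset.filter fun e => phi e ∈ F)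
  · rintro F ⟨hF, hne, hdim⟩
    obtain ⟨p, q, hp, hq, hpq, hSF, hhull, hgood⟩ := face_struct G hF hne hdim
    obtain ⟨e, he, hpe⟩ := (mem_S_iff G).1 hp
    obtain ⟨f, hf, hqf⟩ := (mem_S_iff G).1 hq
    have hef : e ≠ f := by
      intro h; rw [h, hqf] at hpe; exact hpq hpe.symm
    have hfilter : (G.edgeFinset.filter fun e' => phi e' ∈ F) = {e, f} := by
      ext e'
      simp only [Finset.mem_filter, Finset.mem_insert, Finset.mem_singleton]
      constructor
      · rintro ⟨he', hF'⟩
        have : phi e' ∈ S G ∩ F :=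
          ⟨phi_mem_S G (SimpleGraph.mem_edgeFinset.mp he'), hF'⟩
        rw [hSF] at this
        rcases this with h | h
        · left
          exact phi_inj G (SimpleGraph.mem_edgeFinset.mp he')
            (SimpleGraph.mem_edgeFinset.mp he) (by rw [h, hpe])
        · right
          rw [Set.mem_singleton_iff] at h
          exact phi_inj G (SimpleGraph.mem_edgeFinset.mp he')
            (SimpleGraph.mem_edgeFinset.mp hf) (by rw [h, hqf])
      · rintro (rfl | rfl)
        · refine ⟨he, ?_⟩
          rw [hpe]
          have : p ∈ S G ∩ F := by rw [hSF]; left; rfl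
          exact this.2
        · refine ⟨hf, ?_⟩
          rw [hqf]
          have : q ∈ S G ∩ F := by rw [hSF]; right; rfl
          exact this.2
    show (G.edgeFinset.filter fun e' => phi e' ∈ F) ∈ (GoodU G : Set _)
    rw [hfilter]
    rw [Finset.mem_coe, GoodU, Finset.mem_image]
    refine ⟨(e, f), ?_, rfl⟩
    rw [GoodE, Finset.mem_filter, DP, Finset.mem_filter, Finset.mem_product]
    refine ⟨⟨⟨he, hf⟩, hef⟩, ?_⟩
    rintro ⟨e', he', f', hf', hsum, hne1, hne2⟩
    have hsum' : phi e' + phi f' = p + q := by rw [hsum, hpe, hqf]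
    rcases hgood (phi e') (phi f')
        (phi_mem_S G (SimpleGraph.mem_edgeFinset.mp he'))
        (phi_mem_S G (SimpleGraph.mem_edgeFinset.mp hf')) hsum' with
      ⟨h1, _⟩ | ⟨h1, _⟩
    · exact hne1 (phi_inj G (SimpleGraph.mem_edgeFinset.mp he')
        (SimpleGraph.mem_edgeFinset.mp he) (by rw [h1, hpe]))
    · exact hne2 (phi_inj G (SimpleGraph.mem_edgeFinset.mp he')
        (SimpleGraph.mem_edgeFinset.mp hf) (by rw [h1, hqf]))
  · rintro F ⟨hF, hne, hdim⟩ F' ⟨hF', hne', hdim'⟩ hff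
    obtain ⟨p, q, hp, hq, hpq, hSF, hhull, -⟩ := face_struct G hF hne hdim
    obtain ⟨p', q', hp', hq', hpq', hSF', hhull', -⟩ := face_struct G hF' hne' hdim'
    have hff' : (G.edgeFinset.filter fun e => phi e ∈ F)
        = (G.edgeFinset.filter fun e => phi e ∈ F') := hff
    have h1 : S G ∩ F = S G ∩ F' := by
      rw [inter_eq, inter_eq, hff']
    rw [hhull, hhull', ← hSF, ← hSF', h1]

lemma goodE_swap {x : Sym2 (Fin n) × Sym2 (Fin n)} (hx : x ∈ GoodE G) :
    (x.2, x.1) ∈ GoodE G := by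
  rw [GoodE, Finset.mem_filter, DP, Finset.mem_filter, Finset.mem_product] at hx ⊢
  obtain ⟨⟨⟨h1, h2⟩, h3⟩, h4⟩ := hx
  refine ⟨⟨⟨h2, h1⟩, h3.symm⟩, ?_⟩
  rintro ⟨e', he', f', hf', hsum, hne1, hne2⟩
  exact h4 ⟨e', he', f', hf', by rw [hsum]; exact add_comm _ _, hne2, hne1⟩

lemma step2 : 2 * (GoodU G).card ≤ (GoodE G).card := by
  rw [Finset.card_eq_sum_card_image
    (fun x : Sym2 (Fin n) × Sym2 (Fin n) => ({x.1, x.2} : Finset (Sym2 (Fin n))))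
    (GoodE G)]
  have : 2 * (GoodU G).card = ∑ _b ∈ GoodU G, 2 := by
    rw [Finset.sum_const, smul_eq_mul, mul_comm]
  rw [this]
  apply Finset.sum_le_sum
  intro b hb
  rw [GoodU, Finset.mem_image] at hb
  obtain ⟨x, hx, hxb⟩ := hb
  have hx1 : x.1 ≠ x.2 := by
    rw [GoodE, Finset.mem_filter, DP, Finset.mem_filter] at hx
    exact hx.1.2
  have hsub : ({x, (x.2, x.1)} : Finset (Sym2 (Fin n) × Sym2 (Fin n)))
      ⊆ (GoodE G).filter fun a => ({a.1, a.2} : Finset (Sym2 (Fin n))) = b := by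
    intro y hy
    rw [Finset.mem_insert, Finset.mem_singleton] at hy
    rcases hy with rfl | rfl
    · exact Finset.mem_filter.mpr ⟨hx, hxb⟩
    · exact Finset.mem_filter.mpr ⟨goodE_swap G hx,
        by rw [← hxb]; exact Finset.pair_comm _ _⟩
  have hcard : ({x, (x.2, x.1)} : Finset (Sym2 (Fin n) × Sym2 (Fin n))).card = 2 := by
    rw [Finset.card_insert_of_notMem, Finset.card_singleton]
    rw [Finset.mem_singleton]
    intro h
    apply hx1
    have := congrArg Prod.fst h
    simpa using this
  calc 2 = ({x, (x.2, x.1)} : Finset (Sym2 (Fin n) × Sym2 (Fin n))).card := hcard.symm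
    _ ≤ _ := Finset.card_le_card hsub

/-- Number of common neighbours of `a` and `c`. -/
noncomputable def gg (a c : Fin n) : ℕ :=
  (Finset.univ.filter fun b => G.Adj b a ∧ G.Adj b c).card

/-- Labelled injective 4-cycles `a - b - c - d - a`, encoded as `((a,c),(b,d))`. -/
noncomputable def C4T : Finset ((Fin n × Fin n) × (Fin n × Fin n)) :=
  Finset.univ.filter fun x =>
    ((G.Adj x.2.1 x.1.1 ∧ G.Adj x.2.1 x.1.2) ∧ (G.Adj x.2.2 x.1.1 ∧ G.Adj x.2.2 x.1.2))
      ∧ x.1.1 ≠ x.1.2 ∧ x.2.1 ≠ x.2.2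

noncomputable def fib (a c : Fin n) : ℕ :=
  (Finset.univ.filter fun bd : Fin n × Fin n =>
    ((G.Adj bd.1 a ∧ G.Adj bd.1 c) ∧ (G.Adj bd.2 a ∧ G.Adj bd.2 c))
      ∧ a ≠ c ∧ bd.1 ≠ bd.2).card

lemma c4t_card : (C4T G).card = ∑ a, ∑ c, fib G a c := by
  rw [C4T, Finset.card_filter]
  rw [Fintype.sum_prod_type]
  rw [Fintype.sum_prod_type]
  apply Finset.sum_congr rfl
  intro a _
  apply Finset.sum_congr rfl
  intro c _
  rw [fib, Finset.card_filter]

lemma fib_eq {a c : Fin n} (h : a ≠ c) :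
    fib G a c = gg G a c * gg G a c - gg G a c := by
  have hset : (Finset.univ.filter fun bd : Fin n × Fin n =>
      ((G.Adj bd.1 a ∧ G.Adj bd.1 c) ∧ (G.Adj bd.2 a ∧ G.Adj bd.2 c))
        ∧ a ≠ c ∧ bd.1 ≠ bd.2)
      = (Finset.univ.filter fun b => G.Adj b a ∧ G.Adj b c).offDiag := by
    ext bd
    simp only [Finset.mem_filter, Finset.mem_offDiag, Finset.mem_univ, true_and]
    tauto
  rw [fib, hset, Finset.offDiag_card, gg]

lemma fib_diag (a : Fin n) : fib G a a = 0 := by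
  rw [fib, Finset.card_eq_zero, Finset.filter_eq_empty_iff]
  intro bd _
  simp

lemma gg_le (a c : Fin n) : gg G a c ≤ n := by
  refine le_trans (Finset.card_filter_le _ _) ?_
  simp

lemma W_bound : ∑ a, ∑ c, gg G a c ^ 2 ≤ (C4T G).card + 2 * n ^ 3 := by
  have hterm : ∀ a c : Fin n,
      gg G a c ^ 2 ≤ fib G a c + ((if a = c then n ^ 2 else 0) + gg G a c) := by
    intro a c
    by_cases h : a = c
    · subst h
      rw [fib_diag, if_pos rfl]
      have := gg_le G a a
      calc gg G a a ^ 2 ≤ n ^ 2 := Nat.pow_le_pow_left this 2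
        _ ≤ 0 + (n ^ 2 + gg G a a) := by omega
    · rw [fib_eq G h, if_neg h]
      have hle : gg G a c ≤ gg G a c * gg G a c := by
        rcases Nat.eq_zero_or_pos (gg G a c) with h0 | h0
        · simp [h0]
        · exact Nat.le_mul_of_pos_left _ h0
      have : gg G a c ^ 2 = gg G a c * gg G a c := sq (gg G a c) ▸ by ring
      omega
  calc ∑ a, ∑ c, gg G a c ^ 2
      ≤ ∑ a, ∑ c, (fib G a c + ((if a = c then n ^ 2 else 0) + gg G a c)) := by
        apply Finset.sum_le_sum
        intro a _
        exact Finset.sum_le_sum fun c _ => hterm a c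
    _ = (∑ a, ∑ c, fib G a c) + ((∑ a : Fin n, ∑ c : Fin n, if a = c then n ^ 2 else 0)
          + ∑ a, ∑ c, gg G a c) := by
        simp only [Finset.sum_add_distrib]
    _ ≤ (C4T G).card + (n ^ 3 + n ^ 3) := by
        have h1 : (∑ a : Fin n, ∑ c : Fin n, if a = c then n ^ 2 else 0) = n ^ 3 := by
          have : ∀ a : Fin n, (∑ c : Fin n, if a = c then n ^ 2 else 0) = n ^ 2 := by
            intro a
            rw [Finset.sum_ite_eq]
            simp
          rw [Finset.sum_congr rfl fun a _ => this a]
          simp [Finset.card_univ]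
          ring
        have h2 : ∑ a, ∑ c, gg G a c ≤ n ^ 3 := by
          calc ∑ a, ∑ c, gg G a c ≤ ∑ _a : Fin n, ∑ _c : Fin n, n := by
                apply Finset.sum_le_sum
                intro a _
                exact Finset.sum_le_sum fun c _ => gg_le G a c
            _ = n ^ 3 := by simp [Finset.card_univ]; ring
        rw [c4t_card, h1]
        omega
    _ = (C4T G).card + 2 * n ^ 3 := by ring

lemma ord_inj {a b a' b' : Fin n} (hab : a ≠ b) (h : s(a,b) = s(a',b'))
    (hd : decide (a < b) = decide (a' < b')) : a = a' ∧ b = b' := by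
  rcases Sym2.eq_iff.mp h with ⟨rfl, rfl⟩ | ⟨h1, h2⟩
  · exact ⟨rfl, rfl⟩
  · subst h1; subst h2
    have hiff : (a < b) ↔ (b < a) := decide_eq_decide.mp hd
    rcases hab.lt_or_gt with hlt | hlt
    · exact absurd (hiff.mp hlt) (lt_asymm hlt)
    · exact absurd (hiff.mpr hlt) (lt_asymm hlt)

lemma c4t_le_bad : (C4T G).card ≤ 4 * (BadE G).card := by
  have hmap : ∀ x ∈ C4T G,
      ((s(x.1.1, x.2.1), s(x.1.2, x.2.2)),
        (decide (x.1.1 < x.2.1), decide (x.1.2 < x.2.2)))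
      ∈ (BadE G) ×ˢ (Finset.univ : Finset (Bool × Bool)) := by
    rintro ⟨⟨a, c⟩, b, d⟩ hx
    rw [C4T, Finset.mem_filter] at hx
    obtain ⟨-, ⟨⟨hba, hbc⟩, ⟨hda, hdc⟩⟩, hac, hbd⟩ := hx
    rw [Finset.mem_product]
    refine ⟨?_, Finset.mem_univ _⟩
    rw [BadE, Finset.mem_filter, DP, Finset.mem_filter, Finset.mem_product]
    refine ⟨⟨⟨?_, ?_⟩, ?_⟩, ?_⟩
    · rw [SimpleGraph.mem_edgeFinset, SimpleGraph.mem_edgeSet]; exact hba.symm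
    · rw [SimpleGraph.mem_edgeFinset, SimpleGraph.mem_edgeSet]; exact hdc.symm
    · intro heq
      rcases Sym2.eq_iff.mp heq with ⟨h1, h2⟩ | ⟨h1, h2⟩
      · exact hac h1
      · exact hda.ne' h1
    · refine ⟨s(c, b), ?_, s(a, d), ?_, ?_, ?_, ?_⟩
      · rw [SimpleGraph.mem_edgeFinset, SimpleGraph.mem_edgeSet]; exact hbc.symm
      · rw [SimpleGraph.mem_edgeFinset, SimpleGraph.mem_edgeSet]; exact hda.symm
      · show phi s(c,b) + phi s(a,d) = phi s(a,b) + phi s(c,d)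
        rw [phi_mk, phi_mk, phi_mk, phi_mk]
        abel
      · intro heq
        rcases Sym2.eq_iff.mp heq with ⟨h1, h2⟩ | ⟨h1, h2⟩
        · exact hac h1.symm
        · exact hbc.ne' h1
      · intro heq
        rcases Sym2.eq_iff.mp heq with ⟨h1, h2⟩ | ⟨h1, h2⟩
        · exact hbd h2
        · exact hdc.ne' h1
  have hinj : Set.InjOn (fun x : (Fin n × Fin n) × (Fin n × Fin n) =>
      ((s(x.1.1, x.2.1), s(x.1.2, x.2.2)),
        (decide (x.1.1 < x.2.1), decide (x.1.2 < x.2.2)))) (C4T G) := by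
    rintro ⟨⟨a, c⟩, b, d⟩ hx ⟨⟨a', c'⟩, b', d'⟩ hy hf
    rw [Finset.mem_coe, C4T, Finset.mem_filter] at hx hy
    obtain ⟨-, ⟨⟨hba, hbc⟩, ⟨hda, hdc⟩⟩, -, -⟩ := hx
    simp only [Prod.mk.injEq] at hf
    obtain ⟨⟨he1, he2⟩, hd1, hd2⟩ := hf
    obtain ⟨rfl, rfl⟩ := ord_inj hba.ne' he1 hd1
    obtain ⟨rfl, rfl⟩ := ord_inj hdc.ne' he2 hd2
    rfl
  have := Finset.card_le_card_of_injOn _ hmap hinj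
  calc (C4T G).card ≤ ((BadE G) ×ˢ (Finset.univ : Finset (Bool × Bool))).card := this
    _ = (BadE G).card * 4 := by
        rw [Finset.card_product]
        norm_num [Finset.card_univ]
    _ = 4 * (BadE G).card := mul_comm _ _

lemma split_bound :
    (GoodE G).card + (BadE G).card ≤ G.edgeFinset.card ^ 2 := by
  have h := Finset.card_filter_add_card_filter_not
    (s := DP G) (p := fun x => Conf G x.1 x.2)
  have hD : (DP G).card ≤ G.edgeFinset.card ^ 2 := by
    calc (DP G).card ≤ (G.edgeFinset ×ˢ G.edgeFinset).card := Finset.card_filter_le _ _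
      _ = G.edgeFinset.card ^ 2 := by rw [Finset.card_product, sq]
  have : (BadE G).card + (GoodE G).card = (DP G).card := h
  omega

lemma deg_sum_eq : ∑ a, ∑ c, gg G a c = ∑ b, G.degree b * G.degree b := by
  have h1 : ∀ a c : Fin n, gg G a c
      = ∑ b, (if G.Adj b a then 1 else 0) * (if G.Adj b c then 1 else 0) := by
    intro a c
    rw [gg, Finset.card_filter]
    apply Finset.sum_congr rfl
    intro b _
    by_cases h : G.Adj b a <;> by_cases h' : G.Adj b c <;> simp [h, h']
  have hdeg : ∀ b : Fin n, (∑ a : Fin n, if G.Adj b a then 1 else 0) = G.degree b := by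
    intro b
    rw [Finset.sum_boole]
    rw [← SimpleGraph.neighborFinset_eq_filter]
    simp [SimpleGraph.card_neighborFinset_eq_degree]
  calc ∑ a, ∑ c, gg G a c
      = ∑ a : Fin n, ∑ c : Fin n, ∑ b : Fin n,
          (if G.Adj b a then 1 else 0) * (if G.Adj b c then 1 else 0) := by
        simp_rw [h1]
    _ = ∑ a : Fin n, ∑ b : Fin n, ∑ c : Fin n,
          (if G.Adj b a then 1 else 0) * (if G.Adj b c then 1 else 0) := by
        apply Finset.sum_congr rfl
        intro a _
        exact Finset.sum_comm
    _ = ∑ b : Fin n, ∑ a : Fin n, ∑ c : Fin n,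
          (if G.Adj b a then 1 else 0) * (if G.Adj b c then 1 else 0) := Finset.sum_comm
    _ = ∑ b : Fin n, (∑ a : Fin n, if G.Adj b a then 1 else 0)
          * (∑ c : Fin n, if G.Adj b c then 1 else 0) := by
        apply Finset.sum_congr rfl
        intro b _
        rw [Finset.sum_mul_sum]
    _ = ∑ b, G.degree b * G.degree b := by
        apply Finset.sum_congr rfl
        intro b _
        rw [hdeg b]

end EdgePolyAux

set_option maxHeartbeats 1000000 in
/-- For every `ε > 0` there exists `N` such that for all `n ≥ N` and every graph `G`
on `n` vertices with no isolated vertices, the edge polytope `P(G)` has at most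
`(1/32 + ε) n⁴` edges (1-dimensional faces). -/
theorem polytope_edges_upper_bound :
    ∀ ε : ℝ, 0 < ε → ∃ N : ℕ, ∀ n : ℕ, N ≤ n →
      ∀ G : SimpleGraph (Fin n), (∀ v : Fin n, ∃ w : Fin n, G.Adj v w) →
        (faceCount (edgePolytope G) 1 : ℝ) ≤ (1 / 32 + ε) * (n : ℝ) ^ 4 := by
  classical
  intro ε hε
  refine ⟨⌈(4 * ε)⁻¹⌉₊ + 1, fun n hn G _ => ?_⟩
  have hn1 : 1 ≤ n := le_trans (Nat.le_add_left 1 _) hn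
  have hnR : (1 : ℝ) ≤ (n : ℝ) := by exact_mod_cast hn1
  have hn0 : (0 : ℝ) < (n : ℝ) := lt_of_lt_of_le zero_lt_one hnR
  have hNn : ((4 * ε)⁻¹ : ℝ) ≤ (n : ℝ) := by
    calc ((4 * ε)⁻¹ : ℝ) ≤ (⌈(4 * ε)⁻¹⌉₊ : ℝ) := Nat.le_ceil _
      _ ≤ (n : ℝ) := by
          have : (⌈(4 * ε)⁻¹⌉₊ : ℕ) ≤ n := le_trans (Nat.le_succ _) hn
          exact_mod_cast this
  have h4ε : (0 : ℝ) < 4 * ε := by linarith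
  have hεn : (1 : ℝ) ≤ 4 * ε * (n : ℝ) := by
    have := mul_le_mul_of_nonneg_left hNn (le_of_lt h4ε)
    rwa [mul_inv_cancel₀ (ne_of_gt h4ε)] at this
  -- natural number inequalities, cast to the reals
  have c1 : (faceCount (edgePolytope G) 1 : ℝ) ≤ ((EdgePolyAux.GoodU G).card : ℝ) := by
    exact_mod_cast EdgePolyAux.step1 G
  have c2 : 2 * ((EdgePolyAux.GoodU G).card : ℝ) ≤ ((EdgePolyAux.GoodE G).card : ℝ) := by
    exact_mod_cast EdgePolyAux.step2 G
  have c3 : ((EdgePolyAux.GoodE G).card : ℝ) + ((EdgePolyAux.BadE G).card : ℝ)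
      ≤ (G.edgeFinset.card : ℝ) ^ 2 := by
    exact_mod_cast EdgePolyAux.split_bound G
  have c4 : ((EdgePolyAux.C4T G).card : ℝ) ≤ 4 * ((EdgePolyAux.BadE G).card : ℝ) := by
    exact_mod_cast EdgePolyAux.c4t_le_bad G
  have c5 : (∑ a, ∑ c, (EdgePolyAux.gg G a c : ℝ) ^ 2)
      ≤ ((EdgePolyAux.C4T G).card : ℝ) + 2 * (n : ℝ) ^ 3 := by
    exact_mod_cast EdgePolyAux.W_bound G
  have cA : (∑ a, ∑ c, (EdgePolyAux.gg G a c : ℝ))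
      = ∑ b, (G.degree b : ℝ) * (G.degree b : ℝ) := by
    exact_mod_cast EdgePolyAux.deg_sum_eq G
  have cHS : (∑ b, (G.degree b : ℝ)) = 2 * (G.edgeFinset.card : ℝ) := by
    exact_mod_cast SimpleGraph.sum_degrees_eq_twice_card_edges G
  -- Cauchy-Schwarz, twice
  have hcs1 : (∑ b, (G.degree b : ℝ)) ^ 2 ≤ (n : ℝ) * ∑ b, (G.degree b : ℝ) ^ 2 := by
    have := sq_sum_le_card_mul_sum_sq (s := (Finset.univ : Finset (Fin n)))
      (f := fun b => (G.degree b : ℝ))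
    simpa using this
  have hcs2 : (∑ a, ∑ c, (EdgePolyAux.gg G a c : ℝ)) ^ 2
      ≤ ((n : ℝ) * (n : ℝ)) * ∑ a, ∑ c, (EdgePolyAux.gg G a c : ℝ) ^ 2 := by
    have h := sq_sum_le_card_mul_sum_sq (s := (Finset.univ : Finset (Fin n × Fin n)))
      (f := fun x => (EdgePolyAux.gg G x.1 x.2 : ℝ))
    rw [Fintype.sum_prod_type] at h
    have hcard : (((Finset.univ : Finset (Fin n × Fin n)).card : ℕ) : ℝ)
        = (n : ℝ) * (n : ℝ) := by
      simp [Finset.card_univ]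
    rw [hcard] at h
    calc (∑ a, ∑ c, (EdgePolyAux.gg G a c : ℝ)) ^ 2
        ≤ ((n : ℝ) * (n : ℝ)) * ∑ x : Fin n × Fin n, (EdgePolyAux.gg G x.1 x.2 : ℝ) ^ 2 := h
      _ = ((n : ℝ) * (n : ℝ)) * ∑ a, ∑ c, (EdgePolyAux.gg G a c : ℝ) ^ 2 := by
          rw [Fintype.sum_prod_type]
  have key2 : (2 * (G.edgeFinset.card : ℝ)) ^ 2 ≤ (n : ℝ) * ∑ b, (G.degree b : ℝ) ^ 2 := by
    rw [← cHS]; exact hcs1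
  have key1 : (∑ b, (G.degree b : ℝ) ^ 2) ^ 2
      ≤ ((n : ℝ) * (n : ℝ)) * ∑ a, ∑ c, (EdgePolyAux.gg G a c : ℝ) ^ 2 := by
    have hAA : (∑ a, ∑ c, (EdgePolyAux.gg G a c : ℝ)) = ∑ b, (G.degree b : ℝ) ^ 2 := by
      rw [cA]
      apply Finset.sum_congr rfl
      intro b _
      ring
    rw [← hAA]
    exact hcs2
  have hA0 : (0 : ℝ) ≤ ∑ b, (G.degree b : ℝ) ^ 2 :=
    Finset.sum_nonneg fun b _ => sq_nonneg _
  have hW0 : (0 : ℝ) ≤ ∑ a, ∑ c, (EdgePolyAux.gg G a c : ℝ) ^ 2 :=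
    Finset.sum_nonneg fun a _ => Finset.sum_nonneg fun c _ => sq_nonneg _
  have k16 : 16 * (G.edgeFinset.card : ℝ) ^ 4
      ≤ (n : ℝ) ^ 4 * ∑ a, ∑ c, (EdgePolyAux.gg G a c : ℝ) ^ 2 := by
    have e1 : ((2 * (G.edgeFinset.card : ℝ)) ^ 2) ^ 2
        ≤ ((n : ℝ) * ∑ b, (G.degree b : ℝ) ^ 2) ^ 2 :=
      pow_le_pow_left₀ (by positivity) key2 2
    calc 16 * (G.edgeFinset.card : ℝ) ^ 4 = ((2 * (G.edgeFinset.card : ℝ)) ^ 2) ^ 2 := by ring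
      _ ≤ ((n : ℝ) * ∑ b, (G.degree b : ℝ) ^ 2) ^ 2 := e1
      _ = (n : ℝ) ^ 2 * (∑ b, (G.degree b : ℝ) ^ 2) ^ 2 := by ring
      _ ≤ (n : ℝ) ^ 2 * (((n : ℝ) * (n : ℝ)) * ∑ a, ∑ c, (EdgePolyAux.gg G a c : ℝ) ^ 2) :=
          mul_le_mul_of_nonneg_left key1 (by positivity)
      _ = (n : ℝ) ^ 4 * ∑ a, ∑ c, (EdgePolyAux.gg G a c : ℝ) ^ 2 := by ring
  have hWB : (∑ a, ∑ c, (EdgePolyAux.gg G a c : ℝ) ^ 2)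
      ≤ 4 * ((EdgePolyAux.BadE G).card : ℝ) + 2 * (n : ℝ) ^ 3 := by linarith
  have kBE : 16 * (G.edgeFinset.card : ℝ) ^ 4
      ≤ 4 * ((n : ℝ) ^ 4 * ((EdgePolyAux.BadE G).card : ℝ)) + 2 * (n : ℝ) ^ 7 := by
    calc 16 * (G.edgeFinset.card : ℝ) ^ 4
        ≤ (n : ℝ) ^ 4 * ∑ a, ∑ c, (EdgePolyAux.gg G a c : ℝ) ^ 2 := k16
      _ ≤ (n : ℝ) ^ 4 * (4 * ((EdgePolyAux.BadE G).card : ℝ) + 2 * (n : ℝ) ^ 3) :=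
          mul_le_mul_of_nonneg_left hWB (by positivity)
      _ = 4 * ((n : ℝ) ^ 4 * ((EdgePolyAux.BadE G).card : ℝ)) + 2 * (n : ℝ) ^ 7 := by ring
  have hfc2 : 2 * (faceCount (edgePolytope G) 1 : ℝ)
      ≤ (G.edgeFinset.card : ℝ) ^ 2 - ((EdgePolyAux.BadE G).card : ℝ) := by linarith
  have h8 : 4 * (n : ℝ) ^ 4 * (2 * (faceCount (edgePolytope G) 1 : ℝ))
      ≤ 4 * (n : ℝ) ^ 4 * ((G.edgeFinset.card : ℝ) ^ 2 - ((EdgePolyAux.BadE G).card : ℝ)) :=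
    mul_le_mul_of_nonneg_left hfc2 (by positivity)
  have h2n7 : 2 * (n : ℝ) ^ 7 ≤ 8 * ε * (n : ℝ) ^ 8 := by
    nlinarith [mul_nonneg (sub_nonneg.2 hεn) (le_of_lt (pow_pos hn0 7))]
  have hsq : 4 * ((n : ℝ) ^ 4 * (G.edgeFinset.card : ℝ) ^ 2)
      - 16 * (G.edgeFinset.card : ℝ) ^ 4 ≤ (n : ℝ) ^ 8 / 4 := by
    nlinarith [sq_nonneg (8 * (G.edgeFinset.card : ℝ) ^ 2 - (n : ℝ) ^ 4)]
  have hmain : 8 * (n : ℝ) ^ 4 * (faceCount (edgePolytope G) 1 : ℝ)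
      ≤ 8 * (n : ℝ) ^ 4 * ((1 / 32 + ε) * (n : ℝ) ^ 4) := by
    have hexp : 8 * (n : ℝ) ^ 4 * ((1 / 32 + ε) * (n : ℝ) ^ 4)
        = (n : ℝ) ^ 8 / 4 + 8 * ε * (n : ℝ) ^ 8 := by ring
    rw [hexp]
    nlinarith [h8, kBE, h2n7, hsq]
  exact le_of_mul_le_mul_left hmain (by positivity)
end

section
/- Let k ≥ 2 and let G be a finite simple bipartite graph with no isolated vertices and at least k edges. The edge polytope P(G) is k-neighborly if and only if G contains no cycle of even length at most 2k (equivalently, since G is bipartite, no cycle of length at most 2k). -/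
open Set

/-- A polytope `P` is `k`-neighborly if every set of at most `k` of its vertices
(extreme points) is the vertex set of a face of `P`, a face being the intersection of
`P` with a supporting hyperplane (`IsExposed`), together with `∅` and `P` itself. -/
def KNeighborly {n : ℕ} (P : Set (Fin n → ℝ)) (k : ℕ) : Prop :=
  ∀ S : Set (Fin n → ℝ), S ⊆ Set.extremePoints ℝ P → S.Finite → S.ncard ≤ k →
    ∃ F : Set (Fin n → ℝ), IsExposed ℝ P F ∧ F ∩ Set.extremePoints ℝ P = S

/-!
The vertices of `P(G)` are the vectors `e_i + e_j` of the edges `ij`, and a set of them is the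
vertex set of a face exactly when some linear functional, i.e. some vertex weighting `w`, has
`w i + w j ≤ 0` on all edges with equality exactly on the chosen ones.

If every cycle is longer than `2k`, the at most `2k` endpoints of `k` chosen edges induce a forest.
On a forest such a weighting is built by peeling off leaves, and the vertices outside it get a very
negative weight.

Conversely, on an even cycle of length `2m ≤ 2k` the even-indexed and the odd-indexed edges carry
the same total weight, so a functional maximal on the `m` even edges is maximal on the odd ones as
well: the even edges are not the vertex set of a face.
-/

section Convex

variable {E : Type*} [AddCommGroup E] [Module ℝ E] [TopologicalSpace E]

theorem apply_le_of_mem_convexHull {V : Set E} (l : StrongDual ℝ E) {c : ℝ}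
    (hV : ∀ v ∈ V, l v ≤ c) {x : E} (hx : x ∈ convexHull ℝ V) : l x ≤ c :=
  convexHull_min hV (convex_halfSpace_le (l : E →ₗ[ℝ] ℝ).isLinear c) hx

theorem mem_exposedPoints_convexHull_of_lt {V : Set E} {x : E} (hx : x ∈ V)
    (l : StrongDual ℝ E) {c : ℝ} (hc : c < l x) (hV : ∀ y ∈ V, y ≠ x → l y ≤ c) :
    x ∈ (convexHull ℝ V).exposedPoints ℝ := by
  refine ⟨subset_convexHull ℝ V hx, l, fun y hy => ?_⟩
  rcases (V \ {x}).eq_empty_or_nonempty with hT | hT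
  · rw [← insert_eq_of_mem hx, ← insert_sdiff_singleton, hT, insert_empty_eq,
      convexHull_singleton, mem_singleton_iff] at hy
    simp [hy]
  rw [← insert_eq_of_mem hx, ← insert_sdiff_singleton, convexHull_insert hT,
    mem_convexJoin] at hy
  obtain ⟨x', hx', z, hz, a, b, -, hb, hab, rfl⟩ := hy
  rw [mem_singleton_iff] at hx'
  subst x'
  have hgap : 0 < l x - l z :=
    sub_pos.2 ((apply_le_of_mem_convexHull l (fun y hy => hV y hy.1 hy.2) hz).trans_lt hc)
  have hly : l (a • x + b • z) = l x - b * (l x - l z) := by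
    simp only [map_add, map_smul, smul_eq_mul]
    linear_combination (l x) * hab
  rw [hly]
  refine ⟨by nlinarith, fun h => ?_⟩
  obtain rfl : b = 0 := le_antisymm (by nlinarith) hb
  obtain rfl : a = 1 := by linarith
  simp

theorem extremePoints_convexHull_eq_of_forall_lt {V : Set E}
    (h : ∀ x ∈ V, ∃ l : StrongDual ℝ E, ∃ c, c < l x ∧ ∀ y ∈ V, y ≠ x → l y ≤ c) :
    (convexHull ℝ V).extremePoints ℝ = V := by
  refine extremePoints_convexHull_subset.antisymm fun x hx => ?_
  obtain ⟨l, c, hc, hV⟩ := h x hx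
  exact exposedPoints_subset_extremePoints (mem_exposedPoints_convexHull_of_lt hx l hc hV)

theorem convexHull_maximizers_inter (V : Set E) (l : StrongDual ℝ E) :
    {x ∈ convexHull ℝ V | ∀ y ∈ convexHull ℝ V, l y ≤ l x} ∩ V =
      {x ∈ V | ∀ y ∈ V, l y ≤ l x} := by
  ext x
  refine ⟨fun ⟨⟨_, hmax⟩, hx⟩ => ⟨hx, fun y hy => hmax y (subset_convexHull ℝ V hy)⟩,
    fun ⟨hx, hmax⟩ => ⟨⟨subset_convexHull ℝ V hx, fun y hy => ?_⟩, hx⟩⟩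
  exact apply_le_of_mem_convexHull l hmax hy

theorem exists_isExposed_convexHull_inter_eq_iff {V S : Set E} (hS : S.Nonempty) :
    (∃ F, IsExposed ℝ (convexHull ℝ V) F ∧ F ∩ V = S) ↔
      ∃ l : StrongDual ℝ E, S = {x ∈ V | ∀ y ∈ V, l y ≤ l x} := by
  constructor
  · rintro ⟨F, hF, rfl⟩
    obtain ⟨l, rfl⟩ := hF (hS.mono inter_subset_left)
    exact ⟨l, convexHull_maximizers_inter V l⟩
  · rintro ⟨l, rfl⟩
    exact ⟨_, fun _ => ⟨l, rfl⟩, convexHull_maximizers_inter V l⟩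

end Convex

theorem kNeighborly_convexHull_iff {n k : ℕ} {V : Set (Fin n → ℝ)}
    (hV : (convexHull ℝ V).extremePoints ℝ = V) :
    KNeighborly (convexHull ℝ V) k ↔ ∀ S ⊆ V, S.Finite → S.Nonempty → S.ncard ≤ k →
      ∃ l : StrongDual ℝ (Fin n → ℝ), S = {x ∈ V | ∀ y ∈ V, l y ≤ l x} := by
  simp only [KNeighborly, hV]
  refine forall_congr' fun S => ⟨fun h hSV hfin hne hk => ?_, fun h hSV hfin hk => ?_⟩
  · exact (exists_isExposed_convexHull_inter_eq_iff hne).1 (h hSV hfin hk)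
  · rcases S.eq_empty_or_nonempty with rfl | hne
    · exact ⟨∅, fun h => absurd h not_nonempty_empty, empty_inter V⟩
    · exact (exists_isExposed_convexHull_inter_eq_iff hne).2 (h hSV hfin hne hk)

section EdgeVector

variable {ι : Type*} [DecidableEq ι]

def edgeVector (e : Sym2 ι) : ι → ℝ := fun v => if v ∈ e then 1 else 0

theorem edgeVector_injective : Function.Injective (edgeVector (ι := ι)) := by
  intro e e' h
  refine Sym2.ext fun v => ?_
  have hv := congrFun h v
  simp only [edgeVector] at hv
  split_ifs at hv <;> simp_all

theorem single_add_single_eq_edgeVector {i j : ι} (hij : i ≠ j) :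
    Pi.single i 1 + Pi.single j 1 = edgeVector s(i, j) := by
  ext v
  by_cases hi : v = i <;> by_cases hj : v = j <;> simp_all [edgeVector]

theorem map_edgeVector (l : StrongDual ℝ (ι → ℝ)) {i j : ι} (hij : i ≠ j) :
    l (edgeVector s(i, j)) = l (Pi.single i 1) + l (Pi.single j 1) := by
  rw [← single_add_single_eq_edgeVector hij, map_add]

end EdgeVector

theorem edgePolytope_eq_convexHull {n : ℕ} (G : SimpleGraph (Fin n)) :
    edgePolytope G = convexHull ℝ (edgeVector '' G.edgeSet) := by
  refine congrArg (convexHull ℝ) (Set.ext fun x => ⟨?_, ?_⟩)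
  · rintro ⟨i, j, hij, rfl⟩
    exact ⟨s(i, j), hij, (single_add_single_eq_edgeVector hij.ne).symm⟩
  · rintro ⟨e, he, rfl⟩
    induction e using Sym2.ind with
    | _ i j => exact ⟨i, j, he, (single_add_single_eq_edgeVector he.ne).symm⟩

theorem extremePoints_edgePolytope {n : ℕ} (G : SimpleGraph (Fin n)) :
    (edgePolytope G).extremePoints ℝ = edgeVector '' G.edgeSet := by
  rw [edgePolytope_eq_convexHull]
  refine extremePoints_convexHull_eq_of_forall_lt ?_
  rintro _ ⟨e, he, rfl⟩
  induction e using Sym2.ind with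
  | _ i j =>
  -- `x ↦ x i + x j` takes the value `2` at `edgeVector s(i, j)` and at most `1` at other edges.
  let l : StrongDual ℝ (Fin n → ℝ) := .proj i + .proj j
  have hval : ∀ e, l (edgeVector e) = (if i ∈ e then 1 else 0) + (if j ∈ e then 1 else 0) :=
    fun e => rfl
  refine ⟨l, 1, ?_, ?_⟩
  · rw [hval]; norm_num
  · rintro _ ⟨e', -, rfl⟩ hne
    have : ¬ (i ∈ e' ∧ j ∈ e') := by
      rw [Sym2.mem_and_mem_iff (G.ne_of_adj he)]
      exact fun h => hne (congrArg edgeVector h)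
    rw [hval]
    split_ifs <;> simp_all

namespace SimpleGraph

variable {V : Type*} {G : SimpleGraph V}

def IsExposingWeight (G : SimpleGraph V) (F : Set (Sym2 V)) (w : V → ℝ) : Prop :=
  ∀ ⦃i j⦄, G.Adj i j → w i + w j ≤ 0 ∧ (w i + w j = 0 ↔ s(i, j) ∈ F)

theorem Colorable.even_length (hG : G.Colorable 2) {v : V} (c : G.Walk v v) :
    Even c.length :=
  Nat.not_odd_iff_even.1 fun h =>
    absurd ((c.three_le_chromaticNumber_of_odd_loop h).trans hG.chromaticNumber_le) (by norm_num)

theorem Walk.IsCycle.length_le_card [Finite V] {v : V} {c : G.Walk v v} (hc : c.IsCycle) :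
    c.length ≤ Nat.card V := by
  have := Fintype.ofFinite V
  simpa [Walk.length_support, Nat.card_eq_fintype_card] using hc.support_nodup.length_le_card

theorem Walk.IsTrail.mk_getVert_injective {u v : V} {p : G.Walk u v} (hp : p.IsTrail) {i j : ℕ}
    (hi : i < p.length) (hj : j < p.length)
    (h : s(p.getVert i, p.getVert (i + 1)) = s(p.getVert j, p.getVert (j + 1))) : i = j := by
  rw [← Walk.getElem_edges (by simpa using hi), ← Walk.getElem_edges (by simpa using hj)] at h
  exact (hp.edges_nodup.getElem_inj_iff).1 h

theorem IsAcyclic.exists_adj_forall_adj_eq [Finite V] (hG : G.IsAcyclic) {x y : V}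
    (hxy : G.Adj x y) : ∃ u v, G.Adj u v ∧ ∀ w, G.Adj u w → w = v := by
  have : Nonempty V := ⟨x⟩
  -- The first vertex of a longest path is a leaf.
  obtain ⟨u, v, p, hp, hmax⟩ := Walk.exists_isPath_forall_isPath_length_le_length G
  have hnil : ¬ p.Nil := fun h => by
    simpa [h.length_eq_zero] using hmax _ _ _ (Path.singleton hxy).2
  refine ⟨u, p.snd, p.adj_snd hnil, fun w hw => hG.eq_snd_of_adj_start hp hw ?_⟩
  by_contra hwp
  simpa using hmax _ _ (p.cons hw.symm) (hp.cons hwp)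

theorem IsExposingWeight.update_of_forall_adj_eq {F : Set (Sym2 V)} {w : V → ℝ}
    [DecidableEq V] {u v : V} (huv : G.Adj u v) (hleaf : ∀ x, G.Adj u x → x = v)
    (hw : (G.deleteEdges {s(u, v)}).IsExposingWeight F w) {t : ℝ}
    (ht : t + w v ≤ 0 ∧ (t + w v = 0 ↔ s(u, v) ∈ F)) :
    G.IsExposingWeight F (Function.update w u t) := by
  have hside : ∀ ⦃i j⦄, G.Adj i j → j ≠ u →
      Function.update w u t i + Function.update w u t j ≤ 0 ∧
        (Function.update w u t i + Function.update w u t j = 0 ↔ s(i, j) ∈ F) := by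
    intro i j hij hju
    by_cases hiu : i = u
    · subst hiu
      obtain rfl := hleaf j hij
      simpa only [Function.update_self, Function.update_of_ne hju] using ht
    · simp only [Function.update_of_ne hiu, Function.update_of_ne hju]
      refine hw (deleteEdges_adj.2 ⟨hij, fun h => ?_⟩)
      rcases Sym2.mem_iff.1 ((Set.mem_singleton_iff.1 h) ▸ Sym2.mem_mk_left u v) with h | h
      exacts [hiu h.symm, hju h.symm]
  intro i j hij
  by_cases hju : j = u
  · subst hju
    rw [add_comm, Sym2.eq_swap]
    exact hside hij.symm hij.ne
  · exact hside hij hju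

theorem exists_add_le_zero_and_eq_zero_iff (a : ℝ) (p : Prop) :
    ∃ t : ℝ, t + a ≤ 0 ∧ (t + a = 0 ↔ p) := by
  by_cases hp : p
  · exact ⟨-a, by simp [hp]⟩
  · exact ⟨-a - 1, by rw [show -a - 1 + a = -1 by ring]; norm_num [hp]⟩

theorem IsAcyclic.exists_isExposingWeight [Finite V] (hG : G.IsAcyclic) (F : Set (Sym2 V)) :
    ∃ w, G.IsExposingWeight F w := by
  classical
  induction hcard : G.edgeSet.ncard using Nat.strong_induction_on generalizing G with
  | _ N ih =>
  by_cases hE : ∃ x y, G.Adj x y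
  · obtain ⟨x, y, hxy⟩ := hE
    obtain ⟨u, v, huv, hleaf⟩ := hG.exists_adj_forall_adj_eq hxy
    have hlt : (G.deleteEdges {s(u, v)}).edgeSet.ncard < N := by
      rw [edgeSet_deleteEdges, ← hcard]
      exact Set.ncard_sdiff_singleton_lt_of_mem huv
    obtain ⟨w, hw⟩ := ih _ hlt (hG.anti (deleteEdges_le _)) rfl
    obtain ⟨t, ht⟩ := exists_add_le_zero_and_eq_zero_iff (w v) (s(u, v) ∈ F)
    exact ⟨_, hw.update_of_forall_adj_eq huv hleaf ht⟩
  · exact ⟨0, fun i j hij => (hE ⟨i, j, hij⟩).elim⟩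

theorem IsExposingWeight.exists_of_induce {F : Set (Sym2 V)} {A : Set V} [Finite A] {w : A → ℝ}
    (hw : (G.induce A).IsExposingWeight (Sym2.map (↑) ⁻¹' F) w)
    (hFA : ∀ e ∈ F, ∀ v ∈ e, v ∈ A) : ∃ w', G.IsExposingWeight F w' := by
  classical
  obtain ⟨M, hM⟩ := (Set.finite_range w).bddAbove
  -- Vertices outside `A` get a weight below `-w a` for every `a ∈ A`.
  set w' : V → ℝ := fun v => if h : v ∈ A then w ⟨v, h⟩ else -(|M| + 1)
  have hle : ∀ v, w' v ≤ |M| := fun v => by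
    by_cases h : v ∈ A
    · simpa [w', h] using (hM ⟨⟨v, h⟩, rfl⟩).trans (le_abs_self M)
    · simp only [w', h, dite_false]; linarith [abs_nonneg M]
  have hout : ∀ v ∉ A, w' v = -(|M| + 1) := fun v h => by simp [w', h]
  refine ⟨w', fun i j hij => ?_⟩
  by_cases hij' : i ∈ A ∧ j ∈ A
  · obtain ⟨hi, hj⟩ := hij'
    simpa [w', hi, hj] using hw (i := ⟨i, hi⟩) (j := ⟨j, hj⟩) (by simpa using hij)
  · have hF : s(i, j) ∉ F := fun h =>
      hij' ⟨hFA _ h i (Sym2.mem_mk_left i j), hFA _ h j (Sym2.mem_mk_right i j)⟩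
    have hneg : w' i + w' j < 0 := by
      rcases not_and_or.1 hij' with h | h <;> linarith [hout _ h, hle i, hle j]
    exact ⟨hneg.le, iff_of_false hneg.ne hF⟩

theorem ncard_setOf_exists_mem_le [Finite V] (F : Set (Sym2 V)) :
    {v | ∃ e ∈ F, v ∈ e}.ncard ≤ 2 * F.ncard := by
  have hsub : {v | ∃ e ∈ F, v ∈ e} ⊆ (fun e => e.out.1) '' F ∪ (fun e => e.out.2) '' F := by
    rintro v ⟨e, he, hv⟩
    rw [← Quot.out_eq e] at hv
    rcases Sym2.mem_iff.1 hv with rfl | rfl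
    exacts [Or.inl ⟨e, he, rfl⟩, Or.inr ⟨e, he, rfl⟩]
  calc _ ≤ _ := Set.ncard_le_ncard hsub
    _ ≤ _ := Set.ncard_union_le _ _
    _ ≤ F.ncard + F.ncard :=
      add_le_add (Set.ncard_image_le F.toFinite) (Set.ncard_image_le F.toFinite)
    _ = 2 * F.ncard := (two_mul _).symm

theorem exists_isExposingWeight_of_ncard_lt [Finite V] (F : Set (Sym2 V))
    (hcyc : ∀ v (c : G.Walk v v), c.IsCycle → 2 * F.ncard < c.length) :
    ∃ w, G.IsExposingWeight F w := by
  set A := {v | ∃ e ∈ F, v ∈ e}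
  have hA : (G.induce A).IsAcyclic := fun v c hc => by
    have hle := hc.length_le_card
    let f := Embedding.induce (G := G) A
    have hlt := hcyc _ _ (Walk.IsCycle.map (f := f.toHom) f.injective hc)
    rw [Walk.length_map] at hlt
    rw [Nat.card_coe_set_eq] at hle
    have : A.ncard ≤ 2 * F.ncard := ncard_setOf_exists_mem_le F
    omega
  obtain ⟨w, hw⟩ := hA.exists_isExposingWeight (Sym2.map (↑) ⁻¹' F)
  exact hw.exists_of_induce fun e he v hv => ⟨e, he, hv⟩

end SimpleGraph

theorem sum_range_pairs_eq_sum_range_shifted_pairs {M : Type*} [AddCommGroup M] (g : ℕ → M)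
    {m : ℕ} (h : g (2 * m) = g 0) :
    ∑ t ∈ Finset.range m, (g (2 * t) + g (2 * t + 1)) =
      ∑ t ∈ Finset.range m, (g (2 * t + 1) + g (2 * t + 2)) := by
  rw [← sub_eq_zero, ← Finset.sum_sub_distrib]
  calc _ = ∑ t ∈ Finset.range m, (g (2 * t) - g (2 * (t + 1))) :=
        Finset.sum_congr rfl fun t _ => by rw [mul_add, mul_one]; abel
    _ = g 0 - g (2 * m) := by simpa using Finset.sum_range_sub' (fun t => g (2 * t)) m
    _ = 0 := by rw [h, sub_self]

theorem shifted_pairs_eq_of_pairs_eq {g : ℕ → ℝ} {m : ℕ} {a : ℝ} (h : g (2 * m) = g 0)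
    (heven : ∀ t < m, g (2 * t) + g (2 * t + 1) = a)
    (hodd : ∀ t < m, g (2 * t + 1) + g (2 * t + 2) ≤ a) :
    ∀ t < m, g (2 * t + 1) + g (2 * t + 2) = a := by
  have hsum := sum_range_pairs_eq_sum_range_shifted_pairs g h
  rw [Finset.sum_congr rfl fun t ht => heven t (Finset.mem_range.1 ht)] at hsum
  intro t ht
  exact (Finset.sum_eq_sum_iff_of_le fun t ht => hodd t (Finset.mem_range.1 ht)).1 hsum.symm t
    (Finset.mem_range.2 ht)

namespace SimpleGraph

variable {ι : Type*} [DecidableEq ι] {G : SimpleGraph ι}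

theorem IsExposingWeight.exists_image_edgeVector_eq [Fintype ι] {F : Set (Sym2 ι)} {w : ι → ℝ}
    (hw : G.IsExposingWeight F w) (hFG : F ⊆ G.edgeSet) (hF : F.Nonempty) :
    ∃ l : StrongDual ℝ (ι → ℝ), edgeVector '' F =
      {x ∈ edgeVector '' G.edgeSet | ∀ y ∈ edgeVector '' G.edgeSet, l y ≤ l x} := by
  let l : StrongDual ℝ (ι → ℝ) := LinearMap.toContinuousLinearMap (Fintype.linearCombination ℝ w)
  have hval : ∀ e ∈ G.edgeSet, l (edgeVector e) ≤ 0 ∧ (l (edgeVector e) = 0 ↔ e ∈ F) := by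
    intro e he
    induction e using Sym2.ind with
    | _ i j =>
      rw [map_edgeVector l (G.ne_of_adj he)]
      simpa [l, Fintype.linearCombination_apply_single] using hw he
  obtain ⟨e₀, he₀⟩ := hF
  refine ⟨l, Set.ext fun x => ⟨?_, ?_⟩⟩
  · rintro ⟨e, he, rfl⟩
    refine ⟨⟨e, hFG he, rfl⟩, ?_⟩
    rintro _ ⟨e', he', rfl⟩
    rw [(hval e (hFG he)).2.2 he]
    exact (hval e' he').1
  · rintro ⟨⟨e, he, rfl⟩, hmax⟩
    refine ⟨e, (hval e he).2.1 (le_antisymm (hval e he).1 ?_), rfl⟩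
    calc (0 : ℝ) = l (edgeVector e₀) := ((hval e₀ (hFG he₀)).2.2 he₀).symm
      _ ≤ _ := hmax _ ⟨e₀, hFG he₀, rfl⟩

theorem Walk.IsCycle.image_edgeVector_ne {v : ι} {c : G.Walk v v} (hc : c.IsCycle) {m : ℕ}
    (hm : c.length = 2 * m) (l : StrongDual ℝ (ι → ℝ)) :
    (fun t => edgeVector s(c.getVert (2 * t), c.getVert (2 * t + 1))) '' Set.Iio m ≠
      {x ∈ edgeVector '' G.edgeSet | ∀ y ∈ edgeVector '' G.edgeSet, l y ≤ l x} := by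
  set E := edgeVector '' G.edgeSet
  intro hS
  have hm0 : 0 < m := by have := hc.three_le_length; omega
  let g : ℕ → ℝ := fun j => l (Pi.single (c.getVert j) 1)
  have hedge : ∀ j < 2 * m, edgeVector s(c.getVert j, c.getVert (j + 1)) ∈ E ∧
      l (edgeVector s(c.getVert j, c.getVert (j + 1))) = g j + g (j + 1) := fun j hj =>
    have hadj := c.adj_getVert_succ (i := j) (by omega)
    ⟨⟨_, hadj, rfl⟩, map_edgeVector l hadj.ne⟩
  have hmax : ∀ t < m, ∀ y ∈ E, l y ≤ g (2 * t) + g (2 * t + 1) := by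
    intro t ht y hy
    rw [← (hedge (2 * t) (by omega)).2]
    exact (hS ▸ Set.mem_image_of_mem _ ht : _ ∈ {x ∈ E | ∀ y ∈ E, l y ≤ l x}).2 y hy
  have hle : ∀ y ∈ E, l y ≤ g 0 + g 1 := by simpa using hmax 0 hm0
  have heven : ∀ t < m, g (2 * t) + g (2 * t + 1) = g 0 + g 1 := fun t ht =>
    le_antisymm ((hedge (2 * t) (by omega)).2 ▸ hle _ (hedge (2 * t) (by omega)).1)
      ((hedge 0 (by omega)).2 ▸ hmax t ht _ (hedge 0 (by omega)).1)
  have hodd : ∀ t < m, g (2 * t + 1) + g (2 * t + 2) ≤ g 0 + g 1 := fun t ht =>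
    (hedge (2 * t + 1) (by omega)).2 ▸ hle _ (hedge (2 * t + 1) (by omega)).1
  have h12 : g 1 + g 2 = g 0 + g 1 := shifted_pairs_eq_of_pairs_eq
    (by simp only [g, ← hm, Walk.getVert_length, Walk.getVert_zero]) heven hodd 0 hm0
  -- The odd edge `s(c.getVert 1, c.getVert 2)` is therefore a maximizer, hence an even edge.
  have h1mem : edgeVector s(c.getVert 1, c.getVert 2) ∈ {x ∈ E | ∀ y ∈ E, l y ≤ l x} := by
    refine ⟨(hedge 1 (by omega)).1, fun y hy => ?_⟩
    rw [(hedge 1 (by omega)).2, h12]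
    exact hle y hy
  obtain ⟨t, ht : t < m, heq⟩ := hS ▸ h1mem
  have := hc.isTrail.mk_getVert_injective (i := 2 * t) (j := 1) (by omega) (by omega)
    (edgeVector_injective heq)
  omega

end SimpleGraph

open SimpleGraph

section EdgePolytope

variable {n k : ℕ} {G : SimpleGraph (Fin n)}

theorem kNeighborly_edgePolytope_of_forall_isCycle
    (hcyc : ∀ v (c : G.Walk v v), c.IsCycle → 2 * k < c.length) :
    KNeighborly (edgePolytope G) k := by
  have hV := extremePoints_edgePolytope G
  rw [edgePolytope_eq_convexHull] at hV ⊢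
  rw [kNeighborly_convexHull_iff hV]
  intro S hSV _ hne hk
  have hSF : edgeVector '' (edgeVector ⁻¹' S) = S :=
    image_preimage_eq_of_subset (hSV.trans (image_subset_range _ _))
  have hFG : edgeVector ⁻¹' S ⊆ G.edgeSet := fun e he => by
    obtain ⟨e', he', h⟩ := hSV he
    rwa [← edgeVector_injective h]
  have hFk : (edgeVector ⁻¹' S).ncard ≤ k := by
    rwa [← hSF, ncard_image_of_injective _ edgeVector_injective] at hk
  obtain ⟨w, hw⟩ := exists_isExposingWeight_of_ncard_lt (edgeVector ⁻¹' S)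
    fun v c hc => (Nat.mul_le_mul_left 2 hFk).trans_lt (hcyc v c hc)
  obtain ⟨l, hl⟩ := hw.exists_image_edgeVector_eq hFG (by rw [← hSF] at hne; exact hne.of_image)
  exact ⟨l, hSF ▸ hl⟩

theorem not_kNeighborly_edgePolytope_of_isCycle {v : Fin n} {c : G.Walk v v} (hc : c.IsCycle)
    {m : ℕ} (hm : c.length = 2 * m) (hmk : m ≤ k) : ¬ KNeighborly (edgePolytope G) k := by
  have hV := extremePoints_edgePolytope G
  rw [edgePolytope_eq_convexHull] at hV ⊢
  rw [kNeighborly_convexHull_iff hV]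
  intro h
  have hm0 : 0 < m := by have := hc.three_le_length; omega
  obtain ⟨l, hl⟩ := h ((fun t => edgeVector s(c.getVert (2 * t), c.getVert (2 * t + 1))) '' Iio m)
    (image_subset_iff.2 fun t ht => ⟨_, c.adj_getVert_succ (by rw [mem_Iio] at ht; omega), rfl⟩)
    ((finite_Iio m).image _) ⟨_, mem_image_of_mem _ (mem_Iio.2 hm0)⟩
    ((ncard_image_le (finite_Iio m)).trans
      (by rw [← Finset.coe_range, ncard_coe_finset, Finset.card_range]; exact hmk))
  exact hc.image_edgeVector_ne hm l hl

end EdgePolytope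

theorem kNeighborly_iff_bipartite_general {n k : ℕ} (G : SimpleGraph (Fin n))
    (hbip : G.Colorable 2) :
    KNeighborly (edgePolytope G) k ↔
      ¬ ∃ (v : Fin n) (c : G.Walk v v), c.IsCycle ∧ Even c.length ∧ c.length ≤ 2 * k := by
  constructor
  · rintro hN ⟨v, c, hc, ⟨m, hm⟩, hlen⟩
    exact not_kNeighborly_edgePolytope_of_isCycle hc (m := m) (by omega) (by omega) hN
  · intro h
    refine kNeighborly_edgePolytope_of_forall_isCycle fun v c hc => ?_
    by_contra hlen
    exact h ⟨v, c, hc, hbip.even_length c, by omega⟩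

/-- For `k ≥ 2` and a bipartite graph `G` (i.e. `2`-colorable) with no isolated
vertices and at least `k` edges, the edge polytope `P(G)` is `k`-neighborly if and
only if `G` contains no cycle of even length at most `2k`. -/
theorem kNeighborly_iff_bipartite {n k : ℕ} (hk : 2 ≤ k) (G : SimpleGraph (Fin n))
    (hbip : G.Colorable 2)
    (hiso : ∀ v : Fin n, ∃ w : Fin n, G.Adj v w)
    (hE : k ≤ G.edgeSet.ncard) :
    KNeighborly (edgePolytope G) k ↔
      ¬ ∃ (v : Fin n) (c : G.Walk v v), c.IsCycle ∧ Even c.length ∧ c.length ≤ 2 * k :=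
  kNeighborly_iff_bipartite_general G hbip
end

section
/- Let G be a finite connected simple graph with at least two vertices, and suppose d := dim(P(G)) ≥ 3. Then the edge polytope P(G) has at most 2^d + d facets. -/
open Set

/-!
A facet `F` of `P(G)` is cut out by a normal `a` with `a i + a j ≤ 0` on every edge, and since a
facet is a maximal proper face, `F` is also cut out by any `u` that vanishes on every edge on which
`a` vanishes but not on all edges. If some vertex `v` lies on no edge of `F`, then `u = e_v` does.
Otherwise let `S` be the set of maximisers of `a`, over all vertices if `G` is not bipartite and
over one colour class if it is; then `S` is independent and `u = 1_S - 1_{N(S)}` does.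

So there are at most `n` facets of the first kind, and one of the second kind for each admissible
`S`. Since `dim P(G) = n - 1 - dim {z | z i + z j = 0 on every edge}`, and this space is `0` for a
connected non-bipartite graph and at most a line otherwise, either `n = d + 1` and the nonempty
independent sets, none of which has an independent complement, number at most `2^d - 1`; or
`n = d + 2` and `S` ranges over the subsets of the smaller colour class, of size at most `d - 1`.
-/

open Finset Module

section ConvexGeometry

variable {E : Type*} [AddCommGroup E] [Module ℝ E]

theorem IsExposed.eq_convexHull_inter_s14 [TopologicalSpace E] [T2Space E] [IsTopologicalAddGroup E]
    [ContinuousSMul ℝ E] [LocallyConvexSpace ℝ E] {s F : Set E} (hs : s.Finite)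
    (hF : IsExposed ℝ (convexHull ℝ s) F) : F = convexHull ℝ (F ∩ s) := by
  have hFcpt : IsCompact F := hF.isCompact (hs.isCompact_convexHull ℝ)
  have hFconv : Convex ℝ F := hF.convex (convex_convexHull ℝ s)
  refine Subset.antisymm ?_ (convexHull_min inter_subset_left hFconv)
  have hext : F.extremePoints ℝ ⊆ F ∩ s := fun x hx =>
    ⟨hx.1, extremePoints_convexHull_subset (hF.isExtreme.extremePoints_subset_extremePoints hx)⟩
  calc F = closure (convexHull ℝ (F.extremePoints ℝ)) :=
        (closure_convexHull_extremePoints hFcpt hFconv).symm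
    _ ⊆ closure (convexHull ℝ (F ∩ s)) := closure_mono (convexHull_mono hext)
    _ = convexHull ℝ (F ∩ s) := ((hs.subset inter_subset_right).isClosed_convexHull ℝ).closure_eq

theorem LinearMap.eq_zero_of_mem_affineSpan {f : E →ₗ[ℝ] ℝ} {s : Set E} (hf : ∀ x ∈ s, f x = 0)
    {x : E} (hx : x ∈ affineSpan ℝ s) : f x = 0 :=
  (affineSpan_le.2 hf : affineSpan ℝ s ≤ (LinearMap.ker f).toAffineSubspace) hx

theorem affineSpan_eq_of_finrank_vectorSpan_le [FiniteDimensional ℝ E] {s t : Set E} (hst : s ⊆ t)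
    (hs : s.Nonempty) (h : finrank ℝ (vectorSpan ℝ t) ≤ finrank ℝ (vectorSpan ℝ s)) :
    affineSpan ℝ s = affineSpan ℝ t :=
  AffineSubspace.eq_of_direction_eq_of_nonempty_of_le
    (by simpa only [direction_affineSpan] using
      Submodule.eq_of_le_of_finrank_le (vectorSpan_mono ℝ hst) h)
    ((affineSpan_nonempty ℝ).2 hs) (affineSpan_mono ℝ hst)

theorem sep_eq_of_finrank_vectorSpan_le [FiniteDimensional ℝ E] {s : Set E} {f g : E →ₗ[ℝ] ℝ}
    (hne : {x ∈ s | f x = 0}.Nonempty)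
    (hdim : finrank ℝ (vectorSpan ℝ s) ≤ finrank ℝ (vectorSpan ℝ {x ∈ s | f x = 0}) + 1)
    (hfg : ∀ x ∈ s, f x = 0 → g x = 0) (hg : ∃ x ∈ s, g x ≠ 0) :
    {x ∈ s | g x = 0} = {x ∈ s | f x = 0} := by
  have hsub : {x ∈ s | f x = 0} ⊆ {x ∈ s | g x = 0} := fun x hx => ⟨hx.1, hfg x hx.1 hx.2⟩
  have hproper : finrank ℝ (vectorSpan ℝ {x ∈ s | g x = 0}) < finrank ℝ (vectorSpan ℝ s) := by
    by_contra! h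
    obtain ⟨x, hx, hgx⟩ := hg
    have hspan := affineSpan_eq_of_finrank_vectorSpan_le (sep_subset s _) (hne.mono hsub) h
    exact hgx (LinearMap.eq_zero_of_mem_affineSpan (fun y hy => hy.2)
      (hspan ▸ subset_affineSpan ℝ s hx))
  have hspan := affineSpan_eq_of_finrank_vectorSpan_le hsub hne (by omega)
  refine Subset.antisymm (fun x hx => ⟨hx.1, ?_⟩) hsub
  exact LinearMap.eq_zero_of_mem_affineSpan (fun y hy => hy.2) (hspan ▸ subset_affineSpan ℝ _ hx)

theorem finrank_span_le_finrank_vectorSpan_add_one [FiniteDimensional ℝ E] (s : Set E) :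
    finrank ℝ (Submodule.span ℝ s) ≤ finrank ℝ (vectorSpan ℝ s) + 1 := by
  rcases s.eq_empty_or_nonempty with rfl | ⟨x₀, hx₀⟩
  · rw [Submodule.span_empty, finrank_bot]
    omega
  have hle : Submodule.span ℝ s ≤ vectorSpan ℝ s ⊔ ℝ ∙ x₀ :=
    Submodule.span_le.2 fun x hx => Submodule.mem_sup.2
      ⟨x - x₀, vsub_mem_vectorSpan ℝ hx hx₀, x₀, Submodule.mem_span_singleton_self x₀, by abel⟩
  calc finrank ℝ (Submodule.span ℝ s) ≤ finrank ℝ ↥(vectorSpan ℝ s ⊔ ℝ ∙ x₀) :=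
        Submodule.finrank_mono hle
    _ ≤ finrank ℝ (vectorSpan ℝ s) + finrank ℝ (ℝ ∙ x₀) :=
        Submodule.finrank_add_le_finrank_add_finrank _ _
    _ ≤ finrank ℝ (vectorSpan ℝ s) + 1 := by
        gcongr
        exact (finrank_span_le_card ({x₀} : Set E)).trans (by simp)

end ConvexGeometry

theorem Finset.two_mul_card_le_of_compl_notMem {α : Type*} [Fintype α] [DecidableEq α]
    {𝒮 : Finset (Finset α)} (h : ∀ S ∈ 𝒮, Sᶜ ∉ 𝒮) : 2 * #𝒮 ≤ 2 ^ Fintype.card α := by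
  have hdisj : Disjoint 𝒮 (𝒮.map ⟨compl, compl_injective⟩) := by
    rw [Finset.disjoint_left]
    rintro S hS hS'
    obtain ⟨T, hT, rfl⟩ := mem_map.1 hS'
    exact h T hT hS
  calc 2 * #𝒮 = #(𝒮.disjUnion _ hdisj) := by rw [card_disjUnion, card_map, two_mul]
    _ ≤ Fintype.card (Finset α) := card_le_univ _
    _ = 2 ^ Fintype.card α := Fintype.card_finset

namespace SimpleGraph

section Bipartite

variable {V : Type*} {G : SimpleGraph V}

def AlternatesOnEdges (G : SimpleGraph V) (z : V → ℝ) : Prop :=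
  ∀ ⦃i j⦄, G.Adj i j → z i + z j = 0

theorem AlternatesOnEdges.abs_eq_of_reachable {z : V → ℝ} (hz : G.AlternatesOnEdges z) {u v : V}
    (h : G.Reachable u v) : |z u| = |z v| := by
  obtain ⟨w⟩ := h
  induction w with
  | nil => rfl
  | cons hadj _ ih => rw [← ih, eq_neg_of_add_eq_zero_left (hz hadj), abs_neg]

theorem AlternatesOnEdges.isBipartite {z : V → ℝ} (hconn : G.Connected)
    (hz : G.AlternatesOnEdges z) (hz₀ : z ≠ 0) : G.IsBipartite := by
  obtain ⟨v, hv⟩ := Function.ne_iff.1 hz₀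
  have hne (k : V) : z k ≠ 0 := fun h =>
    hv (abs_eq_zero.1 ((hz.abs_eq_of_reachable (hconn v k)).trans (by simp [h])))
  refine IsBipartiteWith.isBipartite (s := {k | 0 < z k}) (t := {k | z k < 0})
    ⟨Set.disjoint_left.2 fun k (h₁ : 0 < z k) (h₂ : z k < 0) => lt_asymm h₁ h₂, fun i j hij => ?_⟩
  have := hz hij
  rcases (hne i).lt_or_gt with h | h
  · exact Or.inr ⟨h, show 0 < z j by linarith⟩
  · exact Or.inl ⟨h, show z j < 0 by linarith⟩

theorem isBipartiteWith_compl_of_isIndepSet {s : Set V} (hs : G.IsIndepSet s)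
    (hsc : G.IsIndepSet sᶜ) : G.IsBipartiteWith s sᶜ := by
  refine ⟨disjoint_compl_right, fun v w hvw => ?_⟩
  by_cases hv : v ∈ s
  · exact Or.inl ⟨hv, fun hw => hs hv hw hvw.ne hvw⟩
  · exact Or.inr ⟨hv, by_contra fun hw => hsc hv hw hvw.ne hvw⟩

theorem IsBipartite.exists_isBipartiteWith_compl [Fintype V] (h : G.IsBipartite) :
    ∃ A : Finset V, G.IsBipartiteWith ↑A (↑A)ᶜ ∧ 2 * #A ≤ Fintype.card V := by
  classical
  obtain ⟨c⟩ := h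
  set A := Finset.univ.filter fun v => c v = 0
  have hA : G.IsBipartiteWith ↑A (↑A)ᶜ := by
    refine ⟨disjoint_compl_right, fun v w hvw => ?_⟩
    have := c.valid hvw
    simp only [A, coe_filter, Finset.mem_univ, true_and, Set.mem_ofPred_eq, Set.mem_compl_iff]
    omega
  have hcard := card_compl_add_card A
  rcases le_total (2 * #A) (Fintype.card V) with hle | hle
  · exact ⟨A, hA, hle⟩
  · refine ⟨Aᶜ, ?_, by omega⟩
    rw [coe_compl, compl_compl]
    exact hA.symm

theorem two_mul_card_le_of_isIndepSet [Fintype V] (hnb : ¬G.IsBipartite)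
    {𝒮 : Finset (Finset V)} (h𝒮 : ∀ S ∈ 𝒮, G.IsIndepSet ↑S) : 2 * #𝒮 ≤ 2 ^ Fintype.card V := by
  classical
  exact two_mul_card_le_of_compl_notMem fun S hS hSc => hnb
    (isBipartiteWith_compl_of_isIndepSet (h𝒮 S hS) (by simpa using h𝒮 _ hSc)).isBipartite

end Bipartite

section CutNormal

variable {V : Type*} {G : SimpleGraph V}

open Classical in
/-- For independent `S`, the normal of the valid inequality `∑ k ∈ S, x k ≤ ∑ k ∈ N(S), x k`. -/
noncomputable def cutNormal (G : SimpleGraph V) (S : Finset V) (k : V) : ℝ :=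
  if k ∈ S then 1 else if ∃ s ∈ S, G.Adj s k then -1 else 0

variable {S : Finset V} {k : V}

theorem cutNormal_of_mem (hk : k ∈ S) : G.cutNormal S k = 1 := by
  simp [cutNormal, hk]

theorem cutNormal_of_adj {s : V} (hk : k ∉ S) (hs : s ∈ S) (hsk : G.Adj s k) :
    G.cutNormal S k = -1 := by
  simp only [cutNormal, hk, if_false]
  rw [if_pos ⟨s, hs, hsk⟩]

theorem cutNormal_of_not_adj (hk : k ∉ S) (hS : ∀ s ∈ S, ¬G.Adj s k) : G.cutNormal S k = 0 := by
  simp only [cutNormal, hk, if_false]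
  rw [if_neg (by simpa using hS)]

theorem cutNormal_add_eq_zero {a : V → ℝ} {R : Set V} {M : ℝ}
    (ha : ∀ ⦃i j⦄, G.Adj i j → a i + a j ≤ 0) (hS : ∀ k, k ∈ S ↔ k ∈ R ∧ a k = M)
    (hM : ∀ k ∈ R, a k ≤ M) (hR : ∀ s ∈ S, ∀ ⦃i j⦄, G.Adj s i → G.Adj i j → j ∈ R)
    (hind : G.IsIndepSet ↑S) ⦃i j : V⦄ (hij : G.Adj i j) (hij₀ : a i + a j = 0) :
    G.cutNormal S i + G.cutNormal S j = 0 := by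
  -- the far end of an `a`-tight edge at a neighbour of `S` would be a maximiser outside `S`
  have not_adj ⦃i j : V⦄ (hij : G.Adj i j) (hij₀ : a i + a j = 0) (hj : j ∉ S) :
      ∀ s ∈ S, ¬G.Adj s i := fun s hs hsi => by
    have hjR := hR s hs hsi hij
    have hsM := ((hS s).1 hs).2
    exact hj ((hS j).2 ⟨hjR, le_antisymm (hM j hjR) (by linarith [ha hsi])⟩)
  by_cases hi : i ∈ S
  · have hj : j ∉ S := fun hj => hind hi hj hij.ne hij
    rw [cutNormal_of_mem hi, cutNormal_of_adj hj hi hij]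
    norm_num
  by_cases hj : j ∈ S
  · rw [cutNormal_of_mem hj, cutNormal_of_adj hi hj hij.symm]
    norm_num
  rw [cutNormal_of_not_adj hi (not_adj hij hij₀ hj),
    cutNormal_of_not_adj hj (not_adj hij.symm (by linarith) hi), add_zero]

theorem exists_cutNormal_of_not_isBipartite [Fintype V] (hconn : G.Connected)
    (hnb : ¬G.IsBipartite) {a : V → ℝ} (ha : ∀ ⦃i j⦄, G.Adj i j → a i + a j ≤ 0)
    (hcov : ∀ v, ∃ w, G.Adj v w ∧ a v + a w = 0) (hna : ¬G.AlternatesOnEdges a) :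
    ∃ S : Finset V, S.Nonempty ∧ G.IsIndepSet ↑S ∧
      (∀ ⦃i j⦄, G.Adj i j → a i + a j = 0 → G.cutNormal S i + G.cutNormal S j = 0) ∧
      ¬G.AlternatesOnEdges (G.cutNormal S) := by
  classical
  obtain ⟨i₀, -⟩ : ∃ i₀ j₀, G.Adj i₀ j₀ ∧ a i₀ + a j₀ ≠ 0 := by
    simpa [AlternatesOnEdges] using hna
  obtain ⟨v, -, hv⟩ := Finset.univ.exists_max_image a ⟨i₀, Finset.mem_univ _⟩
  set S := Finset.univ.filter fun k => a k = a v
  have hS (k : V) : k ∈ S ↔ k ∈ Set.univ ∧ a k = a v := by simp [S]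
  have hpos : 0 < a v := by
    by_contra! h
    have hzero (k : V) : a k = 0 := by
      obtain ⟨w, -, hkw⟩ := hcov k
      linarith [hv k (Finset.mem_univ k), hv w (Finset.mem_univ w)]
    exact hna fun i j _ => by rw [hzero i, hzero j, add_zero]
  have hind : G.IsIndepSet ↑S := fun s hs t ht _ hst => by
    have := ha hst
    linarith [((hS s).1 hs).2, ((hS t).1 ht).2]
  refine ⟨S, ⟨v, by simp [S]⟩, hind,
    cutNormal_add_eq_zero ha hS (fun k _ => hv k (Finset.mem_univ k)) (fun _ _ _ _ _ _ => trivial)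
      hind, fun halt => hnb (halt.isBipartite hconn fun h => ?_)⟩
  have := congrFun h v
  rw [cutNormal_of_mem (by simp [S])] at this
  norm_num at this

theorem exists_cutNormal_of_isBipartiteWith (hconn : G.Connected) {A : Finset V}
    (hA : G.IsBipartiteWith ↑A (↑A)ᶜ) {a : V → ℝ} (ha : ∀ ⦃i j⦄, G.Adj i j → a i + a j ≤ 0)
    (hcov : ∀ v, ∃ w, G.Adj v w ∧ a v + a w = 0) (hna : ¬G.AlternatesOnEdges a) :
    ∃ S ⊆ A, (∀ ⦃i j⦄, G.Adj i j → a i + a j = 0 → G.cutNormal S i + G.cutNormal S j = 0) ∧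
      ¬G.AlternatesOnEdges (G.cutNormal S) := by
  classical
  have hA_adj ⦃i j : V⦄ (hij : G.Adj i j) (hi : i ∈ A) : j ∉ A := hA.mem_of_mem_adj hi hij
  have hAc_adj ⦃i j : V⦄ (hij : G.Adj i j) (hi : i ∉ A) : j ∈ A := by
    simpa using hA.symm.mem_of_mem_adj (by simpa using hi) hij
  obtain ⟨i₀, j₀, hij₀, -⟩ : ∃ i₀ j₀, G.Adj i₀ j₀ ∧ a i₀ + a j₀ ≠ 0 := by
    simpa [AlternatesOnEdges] using hna
  have hAne : A.Nonempty := by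
    by_cases hi₀ : i₀ ∈ A
    exacts [⟨i₀, hi₀⟩, ⟨j₀, hAc_adj hij₀ hi₀⟩]
  obtain ⟨v, hvA, hv⟩ := A.exists_max_image a hAne
  set S := A.filter fun k => a k = a v
  have hS (k : V) : k ∈ S ↔ k ∈ (A : Set V) ∧ a k = a v := by simp [S]
  have hSA : S ⊆ A := filter_subset _ _
  obtain ⟨α, hαA, hαv⟩ : ∃ α ∈ A, a α ≠ a v := by
    by_contra! hconst
    have hA_zero ⦃p q : V⦄ (hpq : G.Adj p q) (hp : p ∈ A) : a p + a q = 0 := by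
      obtain ⟨k, hqk, hsum⟩ := hcov q
      linarith [hconst p hp, hconst k (hAc_adj hqk (hA_adj hpq hp))]
    refine hna fun i j hij => ?_
    by_cases hi : i ∈ A
    · exact hA_zero hij hi
    · linarith [hA_zero hij.symm (hAc_adj hij hi)]
  have hind : G.IsIndepSet ↑S := fun s hs t ht _ hst => hA_adj hst (hSA hs) (hSA ht)
  refine ⟨S, hSA, cutNormal_add_eq_zero ha hS hv
    (fun s hs i j hsi hij => hAc_adj hij (hA_adj hsi (hSA hs))) hind, fun halt => ?_⟩
  have habs := halt.abs_eq_of_reachable (hconn v α)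
  rw [cutNormal_of_mem ((hS v).2 ⟨hvA, rfl⟩),
    cutNormal_of_not_adj (fun h => hαv ((hS α).1 h).2) fun s hs hsα => hA_adj hsα (hSA hs) hαA]
    at habs
  norm_num at habs

end CutNormal

section EdgePolytope

variable {n : ℕ} {G : SimpleGraph (Fin n)}

def edgeVecs (G : SimpleGraph (Fin n)) : Set (Fin n → ℝ) :=
  {x | ∃ i j, G.Adj i j ∧ x = Pi.single i 1 + Pi.single j 1}

noncomputable def edgeFace (G : SimpleGraph (Fin n)) (a : Fin n → ℝ) : Set (Fin n → ℝ) :=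
  convexHull ℝ {x ∈ G.edgeVecs | a ⬝ᵥ x = 0}

theorem edgePolytope_eq_convexHull : edgePolytope G = convexHull ℝ G.edgeVecs := rfl

theorem edgeVecs_finite : G.edgeVecs.Finite :=
  (Set.finite_range fun p : Fin n × Fin n => Pi.single p.1 1 + Pi.single p.2 1).subset
    fun _ ⟨i, j, _, hx⟩ => ⟨(i, j), hx.symm⟩

theorem dotProduct_single_add_single (a : Fin n → ℝ) (i j : Fin n) :
    a ⬝ᵥ (Pi.single i 1 + Pi.single j 1) = a i + a j := by
  simp [dotProduct_add]

theorem polyDim_convexHull (s : Set (Fin n → ℝ)) :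
    polyDim (convexHull ℝ s) = finrank ℝ (vectorSpan ℝ s) := by
  rw [polyDim, ← direction_affineSpan, affineSpan_convexHull, direction_affineSpan]

theorem edgeFace_eq_edgePolytope {a : Fin n → ℝ} (ha : G.AlternatesOnEdges a) :
    G.edgeFace a = edgePolytope G := by
  refine congrArg (convexHull ℝ) (sep_eq_self_iff_mem_true.2 ?_)
  rintro _ ⟨i, j, hij, rfl⟩
  exact (dotProduct_single_add_single a i j).trans (ha hij)

theorem exists_edgeFace_eq_of_isExposed {F : Set (Fin n → ℝ)}
    (hF : IsExposed ℝ (edgePolytope G) F) (hne : F.Nonempty) :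
    ∃ a : Fin n → ℝ, (∀ ⦃i j⦄, G.Adj i j → a i + a j ≤ 0) ∧ F = G.edgeFace a := by
  obtain ⟨l, rfl⟩ := hF hne
  obtain ⟨x₀, hx₀P, hx₀⟩ := hne
  -- edge vectors have coordinate sum `2`, so on them `a ⬝ᵥ x = l x - l x₀`
  set a : Fin n → ℝ := fun k => l (Pi.single k 1) - l x₀ / 2
  have hedge {x} (hx : x ∈ G.edgeVecs) : x ∈ edgePolytope G := subset_convexHull ℝ _ hx
  have hal {x} (hx : x ∈ G.edgeVecs) : a ⬝ᵥ x = l x - l x₀ := by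
    obtain ⟨i, j, -, rfl⟩ := hx
    simp only [dotProduct_single_add_single, a, map_add]
    ring
  refine ⟨a, fun i j hij => ?_, ?_⟩
  · have hx : Pi.single i 1 + Pi.single j 1 ∈ G.edgeVecs := ⟨i, j, hij, rfl⟩
    rw [← dotProduct_single_add_single, hal hx]
    linarith [hx₀ _ (hedge hx)]
  rw [hF.eq_convexHull_inter_s14 edgeVecs_finite, edgeFace]
  congr 1
  ext x
  constructor
  · rintro ⟨⟨hxP, hx⟩, hxe⟩
    exact ⟨hxe, by rw [hal hxe]; linarith [hx x₀ hx₀P, hx₀ x hxP]⟩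
  · rintro ⟨hxe, hx⟩
    rw [hal hxe, sub_eq_zero] at hx
    exact ⟨⟨hedge hxe, fun y hy => hx ▸ hx₀ y hy⟩, hxe⟩

theorem edgeFace_eq_of_forall_adj {a u : Fin n → ℝ}
    (hdim : polyDim (edgePolytope G) ≤ polyDim (G.edgeFace a) + 1) (hne : (G.edgeFace a).Nonempty)
    (hau : ∀ ⦃i j⦄, G.Adj i j → a i + a j = 0 → u i + u j = 0) (hu : ¬G.AlternatesOnEdges u) :
    G.edgeFace a = G.edgeFace u := by
  obtain ⟨i, j, hij, hu⟩ : ∃ i j, G.Adj i j ∧ u i + u j ≠ 0 := by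
    simpa [AlternatesOnEdges] using hu
  rw [edgePolytope_eq_convexHull, edgeFace, polyDim_convexHull, polyDim_convexHull] at hdim
  have key := sep_eq_of_finrank_vectorSpan_le (s := G.edgeVecs) (f := dotProductEquiv ℝ _ a)
    (g := dotProductEquiv ℝ _ u) (by simpa [edgeFace] using hne) hdim
    (by
      rintro _ ⟨i, j, hij, rfl⟩
      simpa [dotProduct_single_add_single] using hau hij)
    ⟨_, ⟨i, j, hij, rfl⟩, by simpa [dotProduct_single_add_single] using hu⟩
  simp only [dotProductEquiv_apply_apply] at key
  rw [edgeFace, edgeFace, key]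

theorem card_le_polyDim_edgePolytope_add (G : SimpleGraph (Fin n)) :
    n ≤ polyDim (edgePolytope G) + 1 +
      finrank ℝ (Submodule.span ℝ G.edgeVecs).dualAnnihilator := by
  have h := Subspace.finrank_add_finrank_dualAnnihilator_eq (Submodule.span ℝ G.edgeVecs)
  rw [finrank_fin_fun] at h
  rw [edgePolytope_eq_convexHull, polyDim_convexHull]
  linarith [finrank_span_le_finrank_vectorSpan_add_one G.edgeVecs]

theorem alternatesOnEdges_of_mem_dualAnnihilator {φ : Module.Dual ℝ (Fin n → ℝ)}
    (hφ : φ ∈ (Submodule.span ℝ G.edgeVecs).dualAnnihilator) :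
    G.AlternatesOnEdges fun k => φ (Pi.single k 1) := fun i j hij => by
  rw [← map_add]
  exact (Submodule.mem_dualAnnihilator φ).1 hφ _ (Submodule.subset_span ⟨i, j, hij, rfl⟩)

theorem card_le_polyDim_edgePolytope_add_two (hconn : G.Connected) (hn : 0 < n) :
    n ≤ polyDim (edgePolytope G) + 2 := by
  let v₀ : Fin n := ⟨0, hn⟩
  have heval : Function.Injective ((Module.Dual.eval ℝ _ (Pi.single v₀ 1)).comp
      (Submodule.span ℝ G.edgeVecs).dualAnnihilator.subtype) := by
    refine (injective_iff_map_eq_zero _).2 fun φ hφ => ?_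
    have hφ₀ : (φ : Module.Dual ℝ (Fin n → ℝ)) (Pi.single v₀ 1) = 0 := hφ
    ext k
    simpa [hφ₀] using
      (alternatesOnEdges_of_mem_dualAnnihilator φ.2).abs_eq_of_reachable (hconn k v₀)
  have := LinearMap.finrank_le_finrank_of_injective heval
  rw [finrank_self] at this
  linarith [card_le_polyDim_edgePolytope_add G]

theorem card_le_polyDim_edgePolytope_add_one (hconn : G.Connected) (hnb : ¬G.IsBipartite) :
    n ≤ polyDim (edgePolytope G) + 1 := by
  have hbot : (Submodule.span ℝ G.edgeVecs).dualAnnihilator = ⊥ := by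
    refine (Submodule.eq_bot_iff _).2 fun φ hφ => ?_
    by_contra hφ₀
    refine hnb ((alternatesOnEdges_of_mem_dualAnnihilator hφ).isBipartite hconn fun hz => hφ₀ ?_)
    ext k
    simpa using congrFun hz k
  have := card_le_polyDim_edgePolytope_add G
  rwa [hbot, finrank_bot, add_zero] at this

theorem edgeFace_eq_edgeFace_single (hconn : G.Connected) (hn : 2 ≤ n) {a : Fin n → ℝ}
    (hdim : polyDim (edgePolytope G) ≤ polyDim (G.edgeFace a) + 1) (hne : (G.edgeFace a).Nonempty)
    {v : Fin n} (hv : ∀ w, G.Adj v w → a v + a w ≠ 0) :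
    G.edgeFace a = G.edgeFace (Pi.single v 1) := by
  have : Nontrivial (Fin n) := Fin.nontrivial_iff_two_le.2 hn
  refine edgeFace_eq_of_forall_adj hdim hne (fun i j hij hij₀ => ?_) fun hu => ?_
  · have hi : i ≠ v := by rintro rfl; exact hv j hij hij₀
    have hj : j ≠ v := by rintro rfl; exact hv i hij.symm (by linarith)
    simp [hi, hj]
  · obtain ⟨w, hvw⟩ := G.mem_support.1 (hconn.preconnected.support_eq_univ ▸ Set.mem_univ v)
    simpa [hvw.ne'] using hu hvw

theorem faceCount_edgePolytope_le_card_add (hconn : G.Connected) (hn : 2 ≤ n) {k : ℕ}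
    (hk : k + 1 = polyDim (edgePolytope G)) (𝒮 : Finset (Finset (Fin n)))
    (h𝒮 : ∀ a : Fin n → ℝ, (∀ ⦃i j⦄, G.Adj i j → a i + a j ≤ 0) →
      (∀ v, ∃ w, G.Adj v w ∧ a v + a w = 0) → ¬G.AlternatesOnEdges a →
      ∃ S ∈ 𝒮, (∀ ⦃i j⦄, G.Adj i j → a i + a j = 0 → G.cutNormal S i + G.cutNormal S j = 0) ∧
        ¬G.AlternatesOnEdges (G.cutNormal S)) :
    faceCount (edgePolytope G) k ≤ n + #𝒮 := by
  have hsub : {F | IsExposed ℝ (edgePolytope G) F ∧ F.Nonempty ∧ polyDim F = k} ⊆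
      Set.range (fun v => G.edgeFace (Pi.single v 1)) ∪
        (fun S => G.edgeFace (G.cutNormal S)) '' ↑𝒮 := by
    rintro F ⟨hF, hne, hFk⟩
    obtain ⟨a, ha, rfl⟩ := exists_edgeFace_eq_of_isExposed hF hne
    have hdim : polyDim (edgePolytope G) ≤ polyDim (G.edgeFace a) + 1 := by omega
    have hna : ¬G.AlternatesOnEdges a := fun h => by
      rw [edgeFace_eq_edgePolytope h] at hFk
      omega
    by_cases hcov : ∀ v, ∃ w, G.Adj v w ∧ a v + a w = 0
    · obtain ⟨S, hS, hau, hu⟩ := h𝒮 a ha hcov hna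
      exact Or.inr ⟨S, hS, (edgeFace_eq_of_forall_adj hdim hne hau hu).symm⟩
    · push Not at hcov
      obtain ⟨v, hv⟩ := hcov
      exact Or.inl ⟨v, (edgeFace_eq_edgeFace_single hconn hn hdim hne hv).symm⟩
  calc faceCount (edgePolytope G) k
      ≤ (Set.range (fun v => G.edgeFace (Pi.single v 1)) ∪
          (fun S => G.edgeFace (G.cutNormal S)) '' ↑𝒮).ncard :=
        Set.ncard_le_ncard hsub ((Set.finite_range _).union (𝒮.finite_toSet.image _))
    _ ≤ n + #𝒮 := by
        refine (Set.ncard_union_le _ _).trans (add_le_add ?_ ?_)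
        · simpa [Set.image_univ] using
            Set.ncard_image_le (f := fun v => G.edgeFace (Pi.single v 1)) Set.finite_univ
        · simpa using Set.ncard_image_le (f := fun S => G.edgeFace (G.cutNormal S)) 𝒮.finite_toSet

theorem faceCount_edgePolytope_le_of_isBipartiteWith (hconn : G.Connected) (hn : 2 ≤ n)
    {A : Finset (Fin n)} (hA : G.IsBipartiteWith ↑A (↑A)ᶜ) {k : ℕ}
    (hk : k + 1 = polyDim (edgePolytope G)) :
    faceCount (edgePolytope G) k ≤ n + 2 ^ #A := by
  rw [← card_powerset]
  refine faceCount_edgePolytope_le_card_add hconn hn hk _ fun a ha hcov hna => ?_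
  obtain ⟨S, hSA, hau, hu⟩ := exists_cutNormal_of_isBipartiteWith hconn hA ha hcov hna
  exact ⟨S, mem_powerset.2 hSA, hau, hu⟩

theorem faceCount_edgePolytope_le_of_not_isBipartite (hconn : G.Connected) (hn : 2 ≤ n)
    (hnb : ¬G.IsBipartite) {k : ℕ} (hk : k + 1 = polyDim (edgePolytope G)) :
    faceCount (edgePolytope G) k ≤ n + (2 ^ (n - 1) - 1) := by
  classical
  set 𝒮 := Finset.univ.filter fun S : Finset (Fin n) => G.IsIndepSet ↑S
  have h𝒮 : 2 * #𝒮 ≤ 2 * 2 ^ (n - 1) := by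
    rw [mul_pow_sub_one (by omega)]
    simpa using two_mul_card_le_of_isIndepSet hnb (𝒮 := 𝒮) fun S hS => (mem_filter.1 hS).2
  have hempty : ∅ ∈ 𝒮 := mem_filter.2 ⟨mem_univ _, by simp⟩
  calc faceCount (edgePolytope G) k ≤ n + #(𝒮.erase ∅) :=
        faceCount_edgePolytope_le_card_add hconn hn hk _ fun a ha hcov hna => by
          obtain ⟨S, hSne, hSind, hau, hu⟩ :=
            exists_cutNormal_of_not_isBipartite hconn hnb ha hcov hna
          exact ⟨S, mem_erase.2 ⟨hSne.ne_empty, mem_filter.2 ⟨mem_univ _, hSind⟩⟩, hau, hu⟩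
    _ ≤ n + (2 ^ (n - 1) - 1) := by
        rw [card_erase_of_mem hempty]
        omega

end EdgePolytope

end SimpleGraph

/-- Let `G` be a connected graph with at least two vertices whose edge polytope has
dimension `d ≥ 3`.  Then `P(G)` has at most `2^d + d` facets (faces of dimension
`d - 1`). -/
theorem facet_upper_bound {n : ℕ} (G : SimpleGraph (Fin n)) (hn : 2 ≤ n)
    (hconn : G.Connected) (d : ℕ) (hd : d = polyDim (edgePolytope G)) (hd3 : 3 ≤ d) :
    faceCount (edgePolytope G) (d - 1) ≤ 2 ^ d + d := by
  by_cases hbip : G.IsBipartite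
  · obtain ⟨A, hA, hAcard⟩ := hbip.exists_isBipartiteWith_compl
    rw [Fintype.card_fin] at hAcard
    have hnd := G.card_le_polyDim_edgePolytope_add_two hconn (by omega)
    have hfacets :=
      G.faceCount_edgePolytope_le_of_isBipartiteWith hconn hn hA (k := d - 1) (by omega)
    have hpowA : 2 ^ #A ≤ 2 ^ (d - 1) := Nat.pow_le_pow_right two_pos (by omega)
    have hpow := mul_pow_sub_one (by omega : d ≠ 0) 2
    have := Nat.one_lt_two_pow (n := d - 1) (by omega)
    omega
  · have hnd := G.card_le_polyDim_edgePolytope_add_one hconn hbip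
    have hfacets :=
      G.faceCount_edgePolytope_le_of_not_isBipartite hconn hn hbip (k := d - 1) (by omega)
    have := Nat.pow_le_pow_right two_pos (by omega : n - 1 ≤ d)
    have := Nat.one_le_two_pow (n := d)
    omega
end
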